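/- arXiv:1905.10034 — 5 statements merged into one kernel-verified Lean document; each statement's English description precedes it below -/
import Mathlib

section
/- If f : D → ℝ (D ⊆ ℤ an interval) satisfies the local reversed Lipschitz condition that for all i, j ∈ D with j > i + ℓ one has f(j) − f(i) ≥ c(j − i) for some c > 0 and ℓ ≥ 0, and T is a D-valued random variable with E|f(T)|^r < ∞ for some r ≥ 1, then the r-th central moment satisfies M_r(f(T)) ≥ (c/2)^r (M_r(T) − ℓ^r). -/
open MeasureTheory Finset

private lemma two_rpow_aux {u v p : ℝ} (hu : 0 ≤ u) (hv : 0 ≤ v) (hp : 1 ≤ p) :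
    (u + v) ^ p ≤ 2 ^ (p - 1) * (u ^ p + v ^ p) := by
  have h := NNReal.rpow_add_le_mul_rpow_add_rpow u.toNNReal v.toNNReal hp
  have h2 := NNReal.coe_le_coe.2 h
  push_cast at h2
  rwa [Real.coe_toNNReal _ hu, Real.coe_toNNReal _ hv] at h2

private lemma core_ineq (s : Finset ℤ) (p : ℤ → ℝ) (hp : ∀ k ∈ s, 0 ≤ p k)
    (hp1 : ∑ k ∈ s, p k = 1) (f : ℤ → ℝ) (c ℓ r : ℝ)
    (hc : 0 < c) (hℓ : 0 ≤ ℓ) (hr : 1 ≤ r)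
    (hlip : ∀ i ∈ s, ∀ j ∈ s, (j : ℝ) > (i : ℝ) + ℓ → f j - f i ≥ c * ((j : ℝ) - (i : ℝ))) :
    ∑ k ∈ s, p k * |f k - ∑ j ∈ s, p j * f j| ^ r ≥
      (c / 2) ^ r * ((∑ k ∈ s, p k * |(k : ℝ) - ∑ j ∈ s, p j * (j : ℝ)| ^ r) - ℓ ^ r) := by
  have hr0 : (0:ℝ) ≤ r := le_trans zero_le_one hr
  set m := ∑ j ∈ s, p j * f j with hm
  set t := ∑ j ∈ s, p j * (j : ℝ) with ht
  set M := ∑ k ∈ s, p k * |f k - m| ^ r with hM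
  set V := ∑ k ∈ s, p k * |(k:ℝ) - t| ^ r with hV
  set S := ∑ j ∈ s, ∑ k ∈ s, p j * (p k * |f j - f k| ^ r) with hS
  set W := ∑ j ∈ s, ∑ k ∈ s, p j * (p k * |(j:ℝ) - (k:ℝ)| ^ r) with hW
  -- double-sum expansion helper
  have key : ∀ (A : ℤ → ℝ), ∑ j ∈ s, ∑ k ∈ s, p j * (p k * (A j + A k))
      = 2 * ∑ j ∈ s, p j * A j := by
    intro A
    have h1 : ∀ j ∈ s, ∑ k ∈ s, p j * (p k * (A j + A k))
        = p j * A j * (∑ k ∈ s, p k) + p j * (∑ k ∈ s, p k * A k) := by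
      intro j _
      simp only [Finset.mul_sum, Finset.sum_mul, ← Finset.sum_add_distrib]
      exact Finset.sum_congr rfl fun k _ => by ring
    rw [Finset.sum_congr rfl h1]
    simp only [hp1, mul_one]
    rw [Finset.sum_add_distrib, ← Finset.sum_mul, hp1, one_mul, two_mul]
  have hppsum : ∑ j ∈ s, ∑ k ∈ s, p j * p k = 1 := by
    simp only [← Finset.mul_sum, hp1, mul_one]
  -- Step 1 : S ≤ 2^r * M
  have step1 : S ≤ 2 ^ r * M := by
    have hpt : ∀ j k : ℤ, |f j - f k| ^ r
        ≤ 2 ^ (r-1) * (|f j - m| ^ r + |f k - m| ^ r) := by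
      intro j k
      have h1 : |f j - f k| ≤ |f j - m| + |f k - m| := by
        have h0 : f j - f k = (f j - m) - (f k - m) := by ring
        rw [h0]
        exact abs_sub _ _
      calc |f j - f k| ^ r ≤ (|f j - m| + |f k - m|) ^ r :=
            Real.rpow_le_rpow (abs_nonneg _) h1 hr0
        _ ≤ _ := two_rpow_aux (abs_nonneg _) (abs_nonneg _) hr
    have h2 : S ≤ ∑ j ∈ s, ∑ k ∈ s,
        p j * (p k * (2 ^ (r-1) * (|f j - m| ^ r + |f k - m| ^ r))) := by
      refine Finset.sum_le_sum fun j hj => Finset.sum_le_sum fun k hk => ?_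
      exact mul_le_mul_of_nonneg_left
        (mul_le_mul_of_nonneg_left (hpt j k) (hp k hk)) (hp j hj)
    have hk := key (fun x => |f x - m| ^ r)
    -- beta ok
    have h3 : ∑ j ∈ s, ∑ k ∈ s,
        p j * (p k * (2 ^ (r-1) * (|f j - m| ^ r + |f k - m| ^ r)))
        = 2 ^ (r-1) * (2 * M) := by
      calc ∑ j ∈ s, ∑ k ∈ s,
          p j * (p k * (2 ^ (r-1) * (|f j - m| ^ r + |f k - m| ^ r)))
          = 2 ^ (r-1) * ∑ j ∈ s, ∑ k ∈ s,
            p j * (p k * (|f j - m| ^ r + |f k - m| ^ r)) := by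
            simp only [Finset.mul_sum]
            exact Finset.sum_congr rfl fun j _ =>
              Finset.sum_congr rfl fun k _ => by ring
        _ = 2 ^ (r-1) * (2 * M) := by rw [hk, hM]
    have h4 : (2:ℝ) ^ (r-1) * 2 = 2 ^ r := by
      rw [Real.rpow_sub two_pos, Real.rpow_one, div_mul_cancel₀]
      norm_num
    calc S ≤ 2 ^ (r-1) * (2 * M) := h2.trans_eq h3
      _ = 2 ^ r * M := by rw [← mul_assoc, h4]
  -- Step 2 : c^r * (W - ℓ^r) ≤ S
  have step2 : c ^ r * (W - ℓ ^ r) ≤ S := by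
    have hpt2 : ∀ j ∈ s, ∀ k ∈ s,
        c ^ r * (|(j:ℝ) - (k:ℝ)| ^ r - ℓ ^ r) ≤ |f j - f k| ^ r := by
      intro j hj k hk
      rcases le_or_gt |(j:ℝ) - (k:ℝ)| ℓ with h | h
      · have h1 : |(j:ℝ)-(k:ℝ)| ^ r ≤ ℓ ^ r :=
          Real.rpow_le_rpow (abs_nonneg _) h hr0
        have h2 : c ^ r * (|(j:ℝ)-(k:ℝ)| ^ r - ℓ ^ r) ≤ 0 :=
          mul_nonpos_of_nonneg_of_nonpos (Real.rpow_nonneg hc.le r) (by linarith)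
        exact h2.trans (Real.rpow_nonneg (abs_nonneg _) r)
      · have hcd : c * |(j:ℝ)-(k:ℝ)| ≤ |f j - f k| := by
          rcases lt_abs.mp h with h' | h'
          · have hf := hlip k hk j hj (by linarith)
            rw [abs_of_pos (by linarith : (0:ℝ) < (j:ℝ)-(k:ℝ))]
            exact le_trans hf (le_abs_self _)
          · have hf := hlip j hj k hk (by linarith)
            rw [abs_sub_comm, abs_of_pos (by linarith : (0:ℝ) < (k:ℝ)-(j:ℝ))]
            exact le_trans (le_trans hf (le_abs_self _)) (le_of_eq (abs_sub_comm _ _))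
        calc c ^ r * (|(j:ℝ)-(k:ℝ)| ^ r - ℓ ^ r)
            ≤ c ^ r * |(j:ℝ)-(k:ℝ)| ^ r :=
              mul_le_mul_of_nonneg_left
                (by linarith [Real.rpow_nonneg hℓ r]) (Real.rpow_nonneg hc.le r)
          _ = (c * |(j:ℝ)-(k:ℝ)|) ^ r := (Real.mul_rpow hc.le (abs_nonneg _)).symm
          _ ≤ |f j - f k| ^ r :=
              Real.rpow_le_rpow (mul_nonneg hc.le (abs_nonneg _)) hcd hr0
    have h5 : ∑ j ∈ s, ∑ k ∈ s,
        p j * (p k * (c ^ r * (|(j:ℝ)-(k:ℝ)| ^ r - ℓ ^ r)))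
        = c ^ r * (W - ℓ ^ r) := by
      have h6 : ∀ j ∈ s, ∀ k ∈ s,
          p j * (p k * (c ^ r * (|(j:ℝ)-(k:ℝ)| ^ r - ℓ ^ r)))
          = c ^ r * (p j * (p k * |(j:ℝ)-(k:ℝ)| ^ r)) - (c ^ r * ℓ ^ r) * (p j * p k) := by
        intros; ring
      calc ∑ j ∈ s, ∑ k ∈ s, p j * (p k * (c ^ r * (|(j:ℝ)-(k:ℝ)| ^ r - ℓ ^ r)))
          = ∑ j ∈ s, ∑ k ∈ s,
            (c ^ r * (p j * (p k * |(j:ℝ)-(k:ℝ)| ^ r)) - (c ^ r * ℓ ^ r) * (p j * p k)) :=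
            Finset.sum_congr rfl fun j hj => Finset.sum_congr rfl fun k hk => h6 j hj k hk
        _ = c ^ r * W - (c ^ r * ℓ ^ r) * (∑ j ∈ s, ∑ k ∈ s, p j * p k) := by
            simp only [Finset.sum_sub_distrib, ← Finset.mul_sum, hW]
        _ = c ^ r * (W - ℓ ^ r) := by rw [hppsum]; ring
    rw [← h5]
    refine Finset.sum_le_sum fun j hj => Finset.sum_le_sum fun k hk => ?_
    exact mul_le_mul_of_nonneg_left
      (mul_le_mul_of_nonneg_left (hpt2 j hj k hk) (hp k hk)) (hp j hj)
  -- Step 3 : V ≤ W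
  have step3 : V ≤ W := by
    have hjen : ∀ j ∈ s, |(j:ℝ) - t| ^ r ≤ ∑ k ∈ s, p k * |(j:ℝ)-(k:ℝ)| ^ r := by
      intro j hj
      have h1 : |(j:ℝ) - t| ≤ ∑ k ∈ s, p k * |(j:ℝ)-(k:ℝ)| := by
        have h2 : (j:ℝ) - t = ∑ k ∈ s, p k * ((j:ℝ)-(k:ℝ)) := by
          rw [ht, Finset.sum_congr rfl fun k _ => mul_sub (p k) ((j:ℝ)) ((k:ℝ)),
            Finset.sum_sub_distrib, ← Finset.sum_mul, hp1, one_mul]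
        rw [h2]
        refine (Finset.abs_sum_le_sum_abs _ _).trans (Finset.sum_le_sum fun k hk => ?_)
        rw [abs_mul, abs_of_nonneg (hp k hk)]
      calc |(j:ℝ) - t| ^ r ≤ (∑ k ∈ s, p k * |(j:ℝ)-(k:ℝ)|) ^ r :=
            Real.rpow_le_rpow (abs_nonneg _) h1 hr0
        _ ≤ _ := Real.rpow_arith_mean_le_arith_mean_rpow s p _ hp hp1
            (fun k _ => abs_nonneg _) hr
    refine Finset.sum_le_sum fun j hj => ?_
    calc p j * |(j:ℝ)-t| ^ r ≤ p j * ∑ k ∈ s, p k * |(j:ℝ)-(k:ℝ)| ^ r :=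
          mul_le_mul_of_nonneg_left (hjen j hj) (hp j hj)
      _ = ∑ k ∈ s, p j * (p k * |(j:ℝ)-(k:ℝ)| ^ r) := Finset.mul_sum _ _ _
  -- combine
  have h2r : (0:ℝ) < 2 ^ r := Real.rpow_pos_of_pos two_pos r
  rw [ge_iff_le, Real.div_rpow hc.le (by norm_num : (0:ℝ) ≤ 2)]
  rw [div_mul_eq_mul_div, div_le_iff₀ h2r]
  have hWV : c ^ r * (V - ℓ ^ r) ≤ c ^ r * (W - ℓ ^ r) :=
    mul_le_mul_of_nonneg_left (by linarith) (Real.rpow_nonneg hc.le r)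
  calc c ^ r * (V - ℓ ^ r) ≤ S := hWV.trans step2
    _ ≤ 2 ^ r * M := step1
    _ = M * 2 ^ r := mul_comm _ _

private lemma integral_comp_eq {Ω : Type*} [MeasurableSpace Ω] (μ : Measure Ω)
    [IsProbabilityMeasure μ] (s : Finset ℤ) (T : Ω → ℤ) (hT : Measurable T)
    (hTD : ∀ ω, T ω ∈ s) (g : ℤ → ℝ) :
    ∫ ω, g (T ω) ∂μ = ∑ k ∈ s, (μ (T ⁻¹' {k})).toReal * g k := by
  have hfun : ∀ ω, g (T ω) = ∑ k ∈ s, Set.indicator (T ⁻¹' {k}) (fun _ => g k) ω := by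
    intro ω
    rw [Finset.sum_eq_single_of_mem (T ω) (hTD ω)]
    · simp [Set.indicator_apply]
    · intro k _ hne
      simp [Set.indicator_apply, Set.mem_preimage, Ne.symm hne]
  calc ∫ ω, g (T ω) ∂μ
      = ∫ ω, ∑ k ∈ s, Set.indicator (T ⁻¹' {k}) (fun _ => g k) ω ∂μ :=
        integral_congr_ae (Filter.Eventually.of_forall hfun)
    _ = ∑ k ∈ s, ∫ ω, Set.indicator (T ⁻¹' {k}) (fun _ => g k) ω ∂μ := by
        refine integral_finset_sum s fun k _ => ?_
        exact (integrable_indicator_iff (hT (measurableSet_singleton k))).2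
          (integrableOn_const (measure_ne_top μ _))
    _ = ∑ k ∈ s, (μ (T ⁻¹' {k})).toReal * g k := by
        refine Finset.sum_congr rfl fun k _ => ?_
        rw [integral_indicator_const (g k) (hT (measurableSet_singleton k)), smul_eq_mul, measureReal_def]

/-- If `f : ℤ → ℝ` satisfies a local reversed Lipschitz condition on an interval
`D = Finset.Icc a b` (for `i, j ∈ D` with `j > i + ℓ`, `f j - f i ≥ c (j - i)`), and
`T` is a `D`-valued random variable with `E|f(T)|^r < ∞` for some `r ≥ 1`, then
`M_r(f(T)) ≥ (c/2)^r (M_r(T) - ℓ^r)`. -/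
theorem stmt0
    {Ω : Type*} [MeasurableSpace Ω] (μ : Measure Ω) [IsProbabilityMeasure μ]
    (a b : ℤ) (f : ℤ → ℝ) (c : ℝ) (ℓ : ℝ) (r : ℝ)
    (hc : 0 < c) (hℓ : 0 ≤ ℓ) (hr : 1 ≤ r)
    (hlip : ∀ i ∈ Finset.Icc a b, ∀ j ∈ Finset.Icc a b,
      (j : ℝ) > (i : ℝ) + ℓ → f j - f i ≥ c * ((j : ℝ) - (i : ℝ)))
    (T : Ω → ℤ) (hT : Measurable T) (hTD : ∀ ω, T ω ∈ Finset.Icc a b)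
    (hint : Integrable (fun ω => |f (T ω)| ^ r) μ) :
    ∫ ω, |f (T ω) - ∫ ω', f (T ω') ∂μ| ^ r ∂μ ≥
      (c / 2) ^ r * ((∫ ω, |(T ω : ℝ) - ∫ ω', (T ω' : ℝ) ∂μ| ^ r ∂μ) - ℓ ^ r) := by
  set s := Finset.Icc a b with hs
  set p : ℤ → ℝ := fun k => (μ (T ⁻¹' {k})).toReal with hpdef
  have hp : ∀ k ∈ s, 0 ≤ p k := fun k _ => ENNReal.toReal_nonneg
  have hp1 : ∑ k ∈ s, p k = 1 := by
    have h := integral_comp_eq μ s T hT hTD (fun _ => 1)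
    simp only [mul_one] at h
    rw [← h]
    simp
  have hm : ∫ ω', f (T ω') ∂μ = ∑ j ∈ s, p j * f j :=
    integral_comp_eq μ s T hT hTD f
  have htt : ∫ ω', (T ω' : ℝ) ∂μ = ∑ j ∈ s, p j * (j : ℝ) :=
    integral_comp_eq μ s T hT hTD (fun k => (k : ℝ))
  rw [hm, htt]
  have hM : ∫ ω, |f (T ω) - ∑ j ∈ s, p j * f j| ^ r ∂μ
      = ∑ k ∈ s, p k * |f k - ∑ j ∈ s, p j * f j| ^ r :=
    integral_comp_eq μ s T hT hTD (fun k => |f k - ∑ j ∈ s, p j * f j| ^ r)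
  have hV : ∫ ω, |(T ω : ℝ) - ∑ j ∈ s, p j * (j : ℝ)| ^ r ∂μ
      = ∑ k ∈ s, p k * |(k : ℝ) - ∑ j ∈ s, p j * (j : ℝ)| ^ r :=
    integral_comp_eq μ s T hT hTD (fun k => |(k : ℝ) - ∑ j ∈ s, p j * (j : ℝ)| ^ r)
  rw [hM, hV]
  exact core_ineq s p hp hp1 f c ℓ r hc hℓ hr hlip
end

section
/- For any real-valued random variable X and any t ∈ ℝ, Ent(e^{tX}) ≤ E[e^{tX} · q(−t(X − X')₊)], where X' is an independent copy of X, q(x) = x(e^x − 1), and (·)₊ denotes the positive part. -/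
open MeasureTheory Real

/-- For any real random variable `X` and `t ∈ ℝ`,
`Ent(e^{tX}) ≤ E[e^{tX} · q(−t(X − X')₊)]` where `X'` is an independent copy of `X`,
`q(x) = x(eˣ − 1)` and `(·)₊` is the positive part.  Here
`Ent Y = E[Y log Y] − E[Y] log E[Y]`. -/
theorem stmt1
    {Ω : Type*} [MeasurableSpace Ω] (μ : Measure Ω) [IsProbabilityMeasure μ]
    (X X' : Ω → ℝ) (t : ℝ)
    (hX : Measurable X) (hX' : Measurable X')
    (hindep : ProbabilityTheory.IndepFun X X' μ)
    (hid : ProbabilityTheory.IdentDistrib X X' μ μ)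
    (hint1 : Integrable (fun ω => exp (t * X ω)) μ)
    (hint2 : Integrable (fun ω => exp (t * X ω) * log (exp (t * X ω))) μ)
    (hint3 : Integrable (fun ω =>
      exp (t * X ω) * ((-t * max (X ω - X' ω) 0) * (exp (-t * max (X ω - X' ω) 0) - 1))) μ) :
    (∫ ω, exp (t * X ω) * log (exp (t * X ω)) ∂μ) -
        (∫ ω, exp (t * X ω) ∂μ) * log (∫ ω, exp (t * X ω) ∂μ) ≤
      ∫ ω, exp (t * X ω) *
        ((-t * max (X ω - X' ω) 0) * (exp (-t * max (X ω - X' ω) 0) - 1)) ∂μ := by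
  classical
  by_cases ht : t = 0
  · subst ht
    simp
  -- notation
  set Y : Ω → ℝ := fun ω => exp (t * X ω) with hYdef
  set Y' : Ω → ℝ := fun ω => exp (t * X' ω) with hY'def
  set g : Ω → ℝ := fun ω =>
    Y ω * ((-t * max (X ω - X' ω) 0) * (exp (-t * max (X ω - X' ω) 0) - 1)) with hgdef
  set g' : Ω → ℝ := fun ω =>
    Y' ω * ((-t * max (X' ω - X ω) 0) * (exp (-t * max (X' ω - X ω) 0) - 1)) with hg'def
  set F : Ω → ℝ := fun ω => Y ω * (t * X ω) - Y ω * (t * X' ω) - Y ω + Y' ω with hFdef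
  set F' : Ω → ℝ := fun ω => Y' ω * (t * X' ω) - Y' ω * (t * X ω) - Y' ω + Y ω with hF'def
  -- identically distributed pairs
  have hpair : ProbabilityTheory.IdentDistrib (fun ω => (X ω, X' ω)) (fun ω => (X' ω, X ω)) μ μ := by
    refine ⟨(hX.prodMk hX').aemeasurable, (hX'.prodMk hX).aemeasurable, ?_⟩
    rw [(ProbabilityTheory.indepFun_iff_map_prod_eq_prod_map_map hX.aemeasurable
        hX'.aemeasurable).mp hindep,
      (ProbabilityTheory.indepFun_iff_map_prod_eq_prod_map_map hX'.aemeasurable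
        hX.aemeasurable).mp hindep.symm, hid.map_eq]
  -- the swapped integrand
  have hφg : Measurable (fun p : ℝ × ℝ =>
      exp (t * p.1) * ((-t * max (p.1 - p.2) 0) * (exp (-t * max (p.1 - p.2) 0) - 1))) := by
    fun_prop
  have hgid : ProbabilityTheory.IdentDistrib g g' μ μ := hpair.comp hφg
  have hg'int : Integrable g' μ := hgid.integrable_iff.mp hint3
  have hgg' : ∫ ω, g ω ∂μ = ∫ ω, g' ω ∂μ := hgid.integral_eq
  -- F vs F'
  have hφF : Measurable (fun p : ℝ × ℝ =>
      exp (t * p.1) * (t * p.1) - exp (t * p.1) * (t * p.2) - exp (t * p.1) + exp (t * p.2)) := by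
    fun_prop
  have hFid : ProbabilityTheory.IdentDistrib F F' μ μ := hpair.comp hφF
  -- pointwise identity F + F' = g + g'
  have hFF' : ∀ ω, F ω + F' ω = g ω + g' ω := by
    intro ω
    rcases le_total (X' ω) (X ω) with h | h
    · have h1 : max (X ω - X' ω) 0 = X ω - X' ω := max_eq_left (sub_nonneg.2 h)
      have h2 : max (X' ω - X ω) 0 = 0 := max_eq_right (sub_nonpos.2 h)
      have h3 : exp (t * X ω) * exp (-t * (X ω - X' ω)) = exp (t * X' ω) := by
        rw [← Real.exp_add]; ring_nf
      simp only [hFdef, hF'def, hgdef, hg'def, hYdef, hY'def, h1, h2, Real.exp_zero]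
      linear_combination (t * (X ω - X' ω)) * h3
    · have h1 : max (X ω - X' ω) 0 = 0 := max_eq_right (sub_nonpos.2 h)
      have h2 : max (X' ω - X ω) 0 = X' ω - X ω := max_eq_left (sub_nonneg.2 h)
      have h3 : exp (t * X' ω) * exp (-t * (X' ω - X ω)) = exp (t * X ω) := by
        rw [← Real.exp_add]; ring_nf
      simp only [hFdef, hF'def, hgdef, hg'def, hYdef, hY'def, h1, h2, Real.exp_zero]
      linear_combination (t * (X' ω - X ω)) * h3
  -- nonnegativity of F and F'
  have hF0 : ∀ ω, 0 ≤ F ω := by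
    intro ω
    have h1 : exp (t * X' ω) = exp (t * X ω) * exp (-(t * X ω - t * X' ω)) := by
      rw [← Real.exp_add]; ring_nf
    simp only [hFdef, hYdef, hY'def]
    nlinarith [Real.add_one_le_exp (-(t * X ω - t * X' ω)), Real.exp_pos (t * X ω)]
  have hF'0 : ∀ ω, 0 ≤ F' ω := by
    intro ω
    have h1 : exp (t * X ω) = exp (t * X' ω) * exp (-(t * X' ω - t * X ω)) := by
      rw [← Real.exp_add]; ring_nf
    simp only [hF'def, hYdef, hY'def]
    nlinarith [Real.add_one_le_exp (-(t * X' ω - t * X ω)), Real.exp_pos (t * X' ω)]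
  -- integrability of F
  have hFmeas : Measurable F := by
    simp only [hFdef, hYdef, hY'def]; fun_prop
  have hsum_int : Integrable (fun ω => F ω + F' ω) μ := by
    have : (fun ω => F ω + F' ω) = fun ω => g ω + g' ω := funext hFF'
    rw [this]
    exact hint3.add hg'int
  have hFint : Integrable F μ := by
    refine hsum_int.mono' hFmeas.aestronglyMeasurable ?_
    filter_upwards with ω
    rw [Real.norm_of_nonneg (hF0 ω)]
    nlinarith [hF'0 ω]
  have hF'int : Integrable F' μ := hFid.integrable_iff.mp hFint
  have hFF'eq : ∫ ω, F ω ∂μ = ∫ ω, F' ω ∂μ := hFid.integral_eq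
  -- ∫ F = ∫ g
  have hFg : ∫ ω, F ω ∂μ = ∫ ω, g ω ∂μ := by
    have h1 : ∫ ω, F ω ∂μ + ∫ ω, F' ω ∂μ = ∫ ω, g ω ∂μ + ∫ ω, g' ω ∂μ := by
      rw [← integral_add hFint hF'int, ← integral_add hint3 hg'int]
      exact integral_congr_ae (Filter.Eventually.of_forall hFF')
    linarith [hFF'eq, hgg', h1]
  -- Y' facts
  have hYid : ProbabilityTheory.IdentDistrib Y Y' μ μ := by
    have := hid.comp (u := fun x => exp (t * x)) (by fun_prop)
    exact this
  have hY'int : Integrable Y' μ := hYid.integrable_iff.mp hint1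
  have hYY' : ∫ ω, Y ω ∂μ = ∫ ω, Y' ω ∂μ := hYid.integral_eq
  -- Y * log Y = Y * (t X)
  have hlog : (fun ω => Y ω * log (Y ω)) = fun ω => Y ω * (t * X ω) := by
    funext ω; simp [hYdef, Real.log_exp]
  have hint2' : Integrable (fun ω => Y ω * (t * X ω)) μ := by
    rw [← hlog]; exact hint2
  -- Y * (t X') integrable
  have hYtX' : Integrable (fun ω => Y ω * (t * X' ω)) μ := by
    have h : (fun ω => Y ω * (t * X' ω)) = fun ω => Y ω * (t * X ω) - F ω - Y ω + Y' ω := by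
      funext ω; simp only [hFdef]; ring
    rw [h]
    exact ((hint2'.sub hFint).sub hint1).add hY'int
  -- X' is integrable
  have hYX'indep : ProbabilityTheory.IndepFun Y X' μ :=
    hindep.comp (φ := fun x => exp (t * x)) (ψ := id) (by fun_prop) measurable_id
  have hYne : ¬ Y =ᵐ[μ] 0 := by
    intro h
    obtain ⟨ω, hω⟩ := h.exists
    exact (Real.exp_pos (t * X ω)).ne' hω
  have hX'i : Integrable X' μ := by
    have hYX'mul : Integrable (Y * X') μ := by
      have h : (Y * X') = fun ω => (1 / t) * (Y ω * (t * X' ω)) := by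
        funext ω; rw [Pi.mul_apply]; field_simp
      rw [h]
      exact hYtX'.const_mul _
    exact hYX'indep.integrable_right_of_integrable_op (· * ·) 1 one_ne_zero (by simp [enorm_mul]) hYX'mul
      hint1.aestronglyMeasurable hX'.aestronglyMeasurable hYne
  -- product of integrals
  have hmul : ∫ ω, Y ω * (t * X' ω) ∂μ = (∫ ω, Y ω ∂μ) * ∫ ω, t * X' ω ∂μ := by
    have hind2 : ProbabilityTheory.IndepFun Y (fun ω => t * X' ω) μ :=
      hindep.comp (φ := fun x => exp (t * x)) (ψ := fun x => t * x) (by fun_prop) (by fun_prop)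
    exact hind2.integral_fun_mul_eq_mul_integral hint1.aestronglyMeasurable
      ((hX'.const_mul t).aestronglyMeasurable)
  -- Jensen
  have hYpos : 0 < ∫ ω, Y ω ∂μ := by
    have : (0:ℝ) < ∫ ω, Y' ω ∂μ := by
      have hjen : exp (∫ ω, t * X' ω ∂μ) ≤ ∫ ω, Y' ω ∂μ := by
        have := convexOn_exp.map_integral_le (μ := μ) (f := fun ω => t * X' ω)
          continuous_exp.continuousOn isClosed_univ
          (Filter.Eventually.of_forall fun ω => Set.mem_univ _)
          (hX'i.const_mul t) ?_
        · exact this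
        · exact hY'int
      linarith [Real.exp_pos (∫ ω, t * X' ω ∂μ)]
    linarith [hYY']
  have hjensen : ∫ ω, t * X' ω ∂μ ≤ log (∫ ω, Y ω ∂μ) := by
    rw [Real.le_log_iff_exp_le hYpos, hYY']
    exact convexOn_exp.map_integral_le (μ := μ) (f := fun ω => t * X' ω)
      continuous_exp.continuousOn isClosed_univ
      (Filter.Eventually.of_forall fun ω => Set.mem_univ _)
      (hX'i.const_mul t) hY'int
  -- combine
  have key : (∫ ω, Y ω * (t * X ω) ∂μ) - (∫ ω, Y ω ∂μ) * log (∫ ω, Y ω ∂μ) ≤ ∫ ω, g ω ∂μ := by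
    have h1 : (∫ ω, Y ω ∂μ) * (∫ ω, t * X' ω ∂μ) ≤ (∫ ω, Y ω ∂μ) * log (∫ ω, Y ω ∂μ) :=
      mul_le_mul_of_nonneg_left hjensen hYpos.le
    have h2 : ∫ ω, F ω ∂μ =
        (∫ ω, Y ω * (t * X ω) ∂μ) - (∫ ω, Y ω * (t * X' ω) ∂μ) - (∫ ω, Y ω ∂μ) + ∫ ω, Y' ω ∂μ := by
      have iA : Integrable (fun ω => Y ω * (t * X ω) - Y ω * (t * X' ω)) μ := hint2'.sub hYtX'
      have iB : Integrable (fun ω => Y ω * (t * X ω) - Y ω * (t * X' ω) - Y ω) μ := iA.sub hint1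
      rw [← integral_sub hint2' hYtX', ← integral_sub iA hint1, ← integral_add iB hY'int]
    rw [← hFg] at *
    linarith [hmul, h2, hYY']
  calc (∫ ω, exp (t * X ω) * log (exp (t * X ω)) ∂μ) -
        (∫ ω, exp (t * X ω) ∂μ) * log (∫ ω, exp (t * X ω) ∂μ)
      = (∫ ω, Y ω * (t * X ω) ∂μ) - (∫ ω, Y ω ∂μ) * log (∫ ω, Y ω ∂μ) := by
        rw [show (fun ω => exp (t * X ω) * log (exp (t * X ω))) = fun ω => Y ω * (t * X ω) from hlog]
    _ ≤ ∫ ω, g ω ∂μ := key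
    _ = _ := rfl
end

section
/- Let ψ(λ) = log E[exp(λ(M − E M))] for a bounded random variable M. Then for λ > 0, d/dλ (ψ(λ)/λ) = Ent(e^{λM}) / (λ² E[e^{λM}]), where Ent(Y) = E[Y log Y] − E[Y] log E[Y]. Consequently, if Ent(e^{λM}) ≤ c K λ² E[e^{λM}] for all λ ∈ (0, c), then ψ(λ) ≤ c K λ² for all λ ∈ (0, c). -/
open MeasureTheory Real Set

/-- For a bounded random variable `M`, with `ψ(λ) = log E[exp(λ(M − E M))]`, one has for
`λ > 0` that `d/dλ (ψ(λ)/λ) = Ent(e^{λM}) / (λ² E[e^{λM}])`, where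
`Ent Y = E[Y log Y] − E[Y] log E[Y]`.  Consequently, if
`Ent(e^{λM}) ≤ c K λ² E[e^{λM}]` for all `λ ∈ (0, c)`, then `ψ(λ) ≤ c K λ²` on `(0, c)`. -/
theorem stmt5
    {Ω : Type*} [MeasurableSpace Ω] (μ : Measure Ω) [IsProbabilityMeasure μ]
    (M : Ω → ℝ) (hM : Measurable M) (B : ℝ) (hbdd : ∀ ω, |M ω| ≤ B)
    (c K : ℝ) (hc : 0 < c) (hK : 0 < K) :
    (∀ lam : ℝ, 0 < lam →
      HasDerivAt
        (fun l : ℝ => log (∫ ω, exp (l * (M ω - ∫ ω', M ω' ∂μ)) ∂μ) / l)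
        (((∫ ω, exp (lam * M ω) * log (exp (lam * M ω)) ∂μ) -
            (∫ ω, exp (lam * M ω) ∂μ) * log (∫ ω, exp (lam * M ω) ∂μ)) /
          (lam ^ 2 * ∫ ω, exp (lam * M ω) ∂μ)) lam) ∧
    ((∀ lam ∈ Ioo (0 : ℝ) c,
        (∫ ω, exp (lam * M ω) * log (exp (lam * M ω)) ∂μ) -
            (∫ ω, exp (lam * M ω) ∂μ) * log (∫ ω, exp (lam * M ω) ∂μ) ≤
          c * K * lam ^ 2 * ∫ ω, exp (lam * M ω) ∂μ) →
      ∀ lam ∈ Ioo (0 : ℝ) c,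
        log (∫ ω, exp (lam * (M ω - ∫ ω', M ω' ∂μ)) ∂μ) ≤ c * K * lam ^ 2) := by
  classical
  set m : ℝ := ∫ ω', M ω' ∂μ with hm
  set Z : ℝ → ℝ := fun l => ∫ ω, exp (l * M ω) ∂μ with hZdef
  set Z' : ℝ → ℝ := fun l => ∫ ω, M ω * exp (l * M ω) ∂μ with hZ'def
  have hint : ∀ l : ℝ, Integrable (fun ω => exp (l * M ω)) μ := by
    intro l
    refine Integrable.mono' (integrable_const (exp (|l| * B)))
      ((hM.const_mul l).exp.aestronglyMeasurable) ?_
    filter_upwards with ω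
    rw [norm_eq_abs, abs_of_pos (exp_pos _)]
    apply exp_le_exp.2
    calc l * M ω ≤ |l * M ω| := le_abs_self _
      _ = |l| * |M ω| := abs_mul _ _
      _ ≤ |l| * B := mul_le_mul_of_nonneg_left (hbdd ω) (abs_nonneg l)
  have hZpos : ∀ l, 0 < Z l := fun l => integral_exp_pos (hint l)
  have hZder : ∀ l, HasDerivAt Z (Z' l) l := by
    intro l
    have key := hasDerivAt_integral_of_dominated_loc_of_deriv_le
      (F := fun x ω => exp (x * M ω)) (F' := fun x ω => M ω * exp (x * M ω))
      (bound := fun _ => B * exp ((|l| + 1) * B)) (μ := μ) (x₀ := l)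
      (Metric.ball_mem_nhds l one_pos) ?_ (hint l) ?_ ?_ (integrable_const _) ?_
    · exact key.2
    · filter_upwards with x
      exact (hM.const_mul x).exp.aestronglyMeasurable
    · exact (hM.mul (hM.const_mul l).exp).aestronglyMeasurable
    · filter_upwards with ω
      intro x hx
      have hB : 0 ≤ B := (abs_nonneg _).trans (hbdd ω)
      rw [norm_eq_abs, abs_mul, abs_of_pos (exp_pos _)]
      have hxl : |x| ≤ |l| + 1 := by
        have h1 : |x - l| < 1 := by simpa [Real.dist_eq] using Metric.mem_ball.1 hx
        calc |x| = |l + (x - l)| := by ring_nf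
          _ ≤ |l| + |x - l| := abs_add_le _ _
          _ ≤ |l| + 1 := by linarith
      have h2 : exp (x * M ω) ≤ exp ((|l| + 1) * B) := by
        apply exp_le_exp.2
        calc x * M ω ≤ |x * M ω| := le_abs_self _
          _ = |x| * |M ω| := abs_mul _ _
          _ ≤ (|l| + 1) * B := mul_le_mul hxl (hbdd ω) (abs_nonneg _) (by positivity)
      exact mul_le_mul (hbdd ω) h2 (exp_pos _).le hB
    · filter_upwards with ω
      intro x hx
      simpa [mul_comm] using ((hasDerivAt_mul_const (M ω)).exp :
        HasDerivAt (fun y : ℝ => exp (y * M ω)) (exp (x * M ω) * M ω) x)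
  have hgder : ∀ l, HasDerivAt (fun l => log (Z l) - l * m) (Z' l / Z l - m) l := fun l =>
    ((hZder l).log (hZpos l).ne').sub (hasDerivAt_mul_const m)
  have hpsi : ∀ l : ℝ, log (∫ ω, exp (l * (M ω - m)) ∂μ) = log (Z l) - l * m := by
    intro l
    have h1 : (fun ω => exp (l * (M ω - m))) = fun ω => exp (-(l * m)) * exp (l * M ω) := by
      funext ω; rw [← exp_add]; ring_nf
    rw [h1, integral_const_mul, log_mul (exp_ne_zero _) (hZpos l).ne', log_exp]
    ring
  have hfeq : (fun l : ℝ => log (∫ ω, exp (l * (M ω - m)) ∂μ) / l)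
      = fun l => (log (Z l) - l * m) / l := by
    funext l; rw [hpsi l]
  have hElog : ∀ l : ℝ, (∫ ω, exp (l * M ω) * log (exp (l * M ω)) ∂μ) = l * Z' l := by
    intro l
    calc (∫ ω, exp (l * M ω) * log (exp (l * M ω)) ∂μ)
        = ∫ ω, l * (M ω * exp (l * M ω)) ∂μ := by
          congr 1; funext ω; rw [log_exp]; ring
      _ = l * Z' l := integral_const_mul _ _
  have part1 : ∀ lam : ℝ, 0 < lam →
      HasDerivAt (fun l : ℝ => (log (Z l) - l * m) / l)
        ((lam * Z' lam - Z lam * log (Z lam)) / (lam ^ 2 * Z lam)) lam := by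
    intro lam hlam
    have h := (hgder lam).div (hasDerivAt_id lam) hlam.ne'
    refine h.congr_deriv ?_
    have hZne : Z lam ≠ 0 := (hZpos lam).ne'
    have hl0 : lam ≠ 0 := hlam.ne'
    simp only [id]
    field_simp
    ring
  constructor
  · intro lam hlam
    rw [hfeq, hElog lam]
    exact part1 lam hlam
  · intro hEnt lam hlam
    obtain ⟨hlam0, hlamc⟩ := hlam
    rw [hpsi lam]
    set f : ℝ → ℝ := fun l => (log (Z l) - l * m) / l with hfdef
    have hZ0 : Z 0 = 1 := by simp [hZdef]
    have hg0 : log (Z 0) - 0 * m = 0 := by rw [hZ0]; simp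
    have hf0 : f 0 = 0 := by simp [hfdef]
    have hZ'0 : Z' 0 = m := by simp [hZ'def, hm]
    have hg_at0 : HasDerivAt (fun l => log (Z l) - l * m) 0 0 := by
      have h := hgder 0
      rwa [hZ'0, hZ0, div_one, sub_self] at h
    have hcont0 : ContinuousAt f 0 := by
      rw [← continuousWithinAt_compl_self]
      unfold ContinuousWithinAt
      rw [hf0]
      have h := hasDerivAt_iff_tendsto_slope.1 hg_at0
      apply h.congr
      intro x
      rw [slope_def_field, hfdef]
      simp [hZ0]
    have hfc : ContinuousOn f (Icc 0 lam) := by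
      intro x hx
      rcases eq_or_lt_of_le hx.1 with h0 | h0
      · rw [← h0]
        exact hcont0.continuousWithinAt
      · exact ((part1 x h0).continuousAt).continuousWithinAt
    set F : ℝ → ℝ := fun l => c * K * l - f l with hFdef
    have hFd : ∀ x ∈ Ioo (0:ℝ) lam, HasDerivAt F
        (c * K - (x * Z' x - Z x * log (Z x)) / (x ^ 2 * Z x)) x := by
      intro x hx
      have h := ((hasDerivAt_id x).const_mul (c * K)).sub (part1 x hx.1)
      simp only [mul_one] at h
      exact h
    have hmono : MonotoneOn F (Icc 0 lam) := by
      apply monotoneOn_of_deriv_nonneg (convex_Icc _ _)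
      · exact ((continuous_const.mul continuous_id).continuousOn).sub hfc
      · rw [interior_Icc]
        intro x hx
        exact ((hFd x hx).differentiableAt).differentiableWithinAt
      · rw [interior_Icc]
        intro x hx
        rw [(hFd x hx).deriv]
        have hZx := hZpos x
        have hpos : 0 < x ^ 2 * Z x := mul_pos (pow_pos hx.1 2) hZx
        have hE := hEnt x ⟨hx.1, hx.2.trans hlamc⟩
        rw [hElog x] at hE
        rw [sub_nonneg, div_le_iff₀ hpos]
        calc x * Z' x - Z x * log (Z x) ≤ c * K * x ^ 2 * Z x := hE
          _ = c * K * (x ^ 2 * Z x) := by ring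
    have hle : F 0 ≤ F lam :=
      hmono ⟨le_refl 0, hlam0.le⟩ ⟨hlam0.le, le_refl lam⟩ hlam0.le
    have hF0 : F 0 = 0 := by simp [hFdef, hf0]
    have hflam : f lam ≤ c * K * lam := by
      rw [hF0] at hle
      simp only [hFdef] at hle
      linarith
    rw [hfdef] at hflam
    simp only at hflam
    rw [div_le_iff₀ hlam0] at hflam
    calc log (Z lam) - lam * m ≤ c * K * lam * lam := hflam
      _ = c * K * lam ^ 2 := by ring
end

section
/- In directed Bernoulli(p) site last passage percolation on the n × ⌊n^α⌋ grid with 0 < α < 1, there exist constants 0 < c₁ < 1 and c₂ > 0, independent of n, such that for all sufficiently large n, P(M_n ≥ c₁ n) ≤ exp(−c₂ n). -/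
open MeasureTheory Real Set

/-- An up-right path on the `n × m` grid. -/
def IsUpRightPath (n m : ℕ) (pa : ℕ → ℕ × ℕ) : Prop :=
  pa 0 = (1, 1) ∧ pa (n + m - 2) = (n, m) ∧
    ∀ i < n + m - 2,
      pa (i + 1) = ((pa i).1 + 1, (pa i).2) ∨ pa (i + 1) = ((pa i).1, (pa i).2 + 1)

/-- The directed last passage time over the `n × m` grid with weights `w`. -/
noncomputable def lastPassageTime (n m : ℕ) (w : ℕ × ℕ → ℝ) : ℝ :=
  ⨆ pa : {pa : ℕ → ℕ × ℕ // IsUpRightPath n m pa},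
    ∑ i ∈ Finset.range (n + m - 1), w (pa.1 i)

namespace Stmt7Aux

/-- The canonical path determined by a set `d` of up-step positions. -/
def pathOf (d : Finset ℕ) (i : ℕ) : ℕ × ℕ :=
  (1 + (i - (d ∩ Finset.range i).card), 1 + (d ∩ Finset.range i).card)

lemma pathOf_card_le (d : Finset ℕ) (i : ℕ) : (d ∩ Finset.range i).card ≤ i := by
  calc (d ∩ Finset.range i).card ≤ (Finset.range i).card :=
        Finset.card_le_card Finset.inter_subset_right
    _ = i := Finset.card_range i

lemma pathOf_sum (d : Finset ℕ) (i : ℕ) : (pathOf d i).1 + (pathOf d i).2 = 2 + i := by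
  have := pathOf_card_le d i
  simp only [pathOf]
  omega

lemma pathOf_injective (d : Finset ℕ) : Function.Injective (pathOf d) := by
  intro i j h
  have h1 := pathOf_sum d i
  have h2 := pathOf_sum d j
  rw [h] at h1
  omega

lemma exists_pathOf {n m : ℕ} (hn : 1 ≤ n) (hm : 1 ≤ m) {pa : ℕ → ℕ × ℕ}
    (h : IsUpRightPath n m pa) :
    ∃ d ∈ Finset.powersetCard (m - 1) (Finset.range (n + m - 2)),
      ∀ i ≤ n + m - 2, pa i = pathOf d i := by
  classical
  obtain ⟨h0, hend, hstep⟩ := h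
  set d := (Finset.range (n + m - 2)).filter (fun j => (pa (j + 1)).2 = (pa j).2 + 1)
    with hd
  have key : ∀ i, i ≤ n + m - 2 → pa i = pathOf d i := by
    intro i
    induction i with
    | zero =>
      intro _
      simp [pathOf, h0]
    | succ i ih =>
      intro hi
      have hi' : i < n + m - 2 := by omega
      have hpa : pa i = pathOf d i := ih (by omega)
      have hk : (d ∩ Finset.range i).card ≤ i := pathOf_card_le d i
      rcases hstep i hi' with hR | hU
      · -- right step, i ∉ d
        have hnotd : i ∉ d := by
          rw [hd]
          simp only [Finset.mem_filter, Finset.mem_range, not_and]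
          intro _
          rw [hR]
          omega
        have hcard : (d ∩ Finset.range (i + 1)).card = (d ∩ Finset.range i).card := by
          rw [Finset.range_add_one, Finset.inter_comm, Finset.insert_inter_of_notMem hnotd,
            Finset.inter_comm]
        rw [hR, hpa, Prod.ext_iff]
        simp only [pathOf, hcard]
        exact ⟨by omega, by first | trivial | omega⟩
      · -- up step, i ∈ d
        have hind : i ∈ d := by
          rw [hd]
          simp only [Finset.mem_filter, Finset.mem_range]
          refine ⟨hi', ?_⟩
          rw [hU]
        have hni : i ∉ d ∩ Finset.range i := by
          simp [Finset.mem_range]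
        have hcard : (d ∩ Finset.range (i + 1)).card = (d ∩ Finset.range i).card + 1 := by
          rw [Finset.range_add_one, Finset.inter_comm, Finset.insert_inter_of_mem hind,
            Finset.inter_comm, Finset.card_insert_of_notMem hni]
        rw [hU, hpa, Prod.ext_iff]
        simp only [pathOf, hcard]
        exact ⟨by omega, by first | trivial | omega⟩
  have hsub : d ⊆ Finset.range (n + m - 2) := Finset.filter_subset _ _
  have hdcard : d.card = m - 1 := by
    have h1 := key (n + m - 2) le_rfl
    rw [hend] at h1
    have h2 : d ∩ Finset.range (n + m - 2) = d := Finset.inter_eq_left.mpr hsub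
    have h3 : m = 1 + d.card := by
      have := congrArg Prod.snd h1
      simpa [pathOf, h2] using this
    omega
  exact ⟨d, Finset.mem_powersetCard.mpr ⟨hsub, hdcard⟩, key⟩

lemma mgf_indicator {Ω : Type*} [MeasurableSpace Ω] {μ : Measure Ω} [IsProbabilityMeasure μ]
    {A : Set Ω} (hA : MeasurableSet A) {p t : ℝ} (hp : 0 ≤ p)
    (hμA : μ A = ENNReal.ofReal p) :
    ProbabilityTheory.mgf (A.indicator fun _ => 1) μ t = 1 + (exp t - 1) * p := by
  have heq : (fun ω => exp (t * A.indicator (fun _ => (1 : ℝ)) ω))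
      = fun ω => 1 + A.indicator (fun _ => exp t - 1) ω := by
    funext ω
    by_cases hω : ω ∈ A <;> simp [hω]
  rw [ProbabilityTheory.mgf, heq,
    integral_add (integrable_const 1) ((integrable_const _).indicator hA),
    integral_const, integral_indicator_const _ hA]
  simp [measureReal_def, hμA, ENNReal.toReal_ofReal hp, mul_comm]

lemma chernoff_sum {Ω : Type*} [MeasurableSpace Ω] {μ : Measure Ω} [IsProbabilityMeasure μ]
    {ι : Type*} {W : ι → Ω → ℝ} (hWmeas : ∀ v, Measurable (W v))
    (hWind : ProbabilityTheory.iIndepFun W μ)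
    (hbd : ∀ v ω, W v ω = 0 ∨ W v ω = 1)
    {t b : ℝ} (ht : 0 ≤ t) (hmgf : ∀ v, ProbabilityTheory.mgf (W v) μ t = b)
    (s : Finset ι) (c : ℝ) :
    μ {ω | c ≤ ∑ v ∈ s, W v ω} ≤ ENNReal.ofReal (exp (-t * c) * b ^ s.card) := by
  classical
  set X : Ω → ℝ := fun ω => ∑ v ∈ s, W v ω with hX
  have hXmeas : Measurable X := Finset.measurable_sum s (fun v _ => hWmeas v)
  have hXle : ∀ ω, X ω ≤ s.card := by
    intro ω
    calc X ω ≤ ∑ _v ∈ s, (1 : ℝ) :=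
          Finset.sum_le_sum (fun v _ => by rcases hbd v ω with h | h <;> rw [h] <;> norm_num)
      _ = s.card := by simp
  have hint : Integrable (fun ω => exp (t * X ω)) μ := by
    refine Integrable.mono' (integrable_const (exp (t * s.card)))
      ((hXmeas.const_mul t).exp.aestronglyMeasurable) ?_
    filter_upwards with ω
    rw [Real.norm_eq_abs, abs_of_nonneg (exp_pos _).le]
    exact exp_le_exp.mpr (mul_le_mul_of_nonneg_left (hXle ω) ht)
  have hcher := ProbabilityTheory.measure_ge_le_exp_mul_mgf (X := X) (μ := μ) c ht hint
  have hfun : X = ∑ v ∈ s, W v := by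
    funext ω
    rw [hX]
    simp [Finset.sum_apply]
  have hmgfX : ProbabilityTheory.mgf X μ t = b ^ s.card := by
    rw [hfun, hWind.mgf_sum hWmeas s, Finset.prod_congr rfl (fun v _ => hmgf v),
      Finset.prod_const]
  rw [hmgfX] at hcher
  have hne : μ {ω | c ≤ X ω} ≠ ⊤ := measure_ne_top μ _
  calc μ {ω | c ≤ X ω} = ENNReal.ofReal ((μ {ω | c ≤ X ω}).toReal) :=
        (ENNReal.ofReal_toReal hne).symm
    _ ≤ ENNReal.ofReal (exp (-t * c) * b ^ s.card) := ENNReal.ofReal_le_ofReal hcher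

lemma eventually_rpow_log_le {α c : ℝ} (hα0 : 0 < α) (hα1 : α < 1) (hc : 0 < c) :
    ∃ n₀ : ℕ, ∀ n : ℕ, n₀ ≤ n → (n : ℝ) ^ α * (log (2 * n) + 2) ≤ c * n := by
  have h1α : (0 : ℝ) < 1 - α := by linarith
  have hlog : (fun x : ℝ => log x) =o[Filter.atTop] fun x : ℝ => x ^ (1 - α) :=
    isLittleO_log_rpow_atTop h1α
  have hconst : (fun _ : ℝ => log 2 + 2) =o[Filter.atTop] fun x : ℝ => x ^ (1 - α) := by
    refine Asymptotics.isLittleO_const_left.mpr (Or.inr ?_)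
    exact Filter.tendsto_abs_atTop_atTop.comp (tendsto_rpow_atTop h1α)
  have hsum : (fun x : ℝ => log (2 * x) + 2) =o[Filter.atTop] fun x : ℝ => x ^ (1 - α) := by
    refine (hconst.add hlog).congr' ?_ (Filter.EventuallyEq.refl _ _)
    filter_upwards [Filter.eventually_gt_atTop (0 : ℝ)] with x hx
    rw [log_mul (by norm_num) (ne_of_gt hx)]
    ring
  have hmul : (fun x : ℝ => x ^ α * (log (2 * x) + 2)) =o[Filter.atTop] fun x : ℝ => x := by
    have h := (Asymptotics.isBigO_refl (fun x : ℝ => x ^ α) Filter.atTop).mul_isLittleO hsum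
    refine h.congr' (Filter.EventuallyEq.refl _ _) ?_
    filter_upwards [Filter.eventually_gt_atTop (0 : ℝ)] with x hx
    rw [← Real.rpow_add hx]
    norm_num
  have hev := hmul.def hc
  rw [Filter.eventually_atTop] at hev
  obtain ⟨x₀, hx₀⟩ := hev
  refine ⟨max 1 ⌈x₀⌉₊, fun n hn => ?_⟩
  have hn1 : (1 : ℝ) ≤ n := by exact_mod_cast le_trans (le_max_left _ _) hn
  have hnx : x₀ ≤ (n : ℝ) :=
    le_trans (Nat.le_ceil x₀) (by exact_mod_cast le_trans (le_max_right _ _) hn)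
  have h := hx₀ n hnx
  calc (n : ℝ) ^ α * (log (2 * n) + 2) ≤ ‖(n : ℝ) ^ α * (log (2 * n) + 2)‖ :=
        le_abs_self _
    _ ≤ c * ‖(n : ℝ)‖ := h
    _ = c * n := by rw [Real.norm_eq_abs, abs_of_nonneg (by linarith : (0 : ℝ) ≤ n)]

end Stmt7Aux

open Stmt7Aux

set_option maxHeartbeats 1000000

/-- Linear growth: for Bernoulli(p) directed last passage percolation on the
`n × ⌊n^α⌋` grid, `0 < α < 1`, there are constants `0 < c₁ < 1` and `c₂ > 0`,
independent of `n`, with `P(M_n ≥ c₁ n) ≤ exp(−c₂ n)` for all large `n`. -/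
theorem stmt7
    {Ω : Type*} [MeasurableSpace Ω] (μ : Measure Ω) [IsProbabilityMeasure μ]
    (α p : ℝ) (hα : α ∈ Ioo (0 : ℝ) 1) (hp : p ∈ Ioo (0 : ℝ) 1)
    (w : ℕ × ℕ → Ω → ℝ) (hmeas : ∀ v, Measurable (w v))
    (hindep : ProbabilityTheory.iIndepFun w μ)
    (hBer : ∀ v, μ {ω | w v ω = 1} = ENNReal.ofReal p ∧
      μ {ω | w v ω = 0} = ENNReal.ofReal (1 - p)) :
    ∃ c₁ ∈ Ioo (0 : ℝ) 1, ∃ c₂ > (0 : ℝ), ∃ n₀ : ℕ, ∀ n ≥ n₀,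
      μ {ω | lastPassageTime n ⌊(n : ℝ) ^ α⌋₊ (fun v => w v ω) ≥ c₁ * n} ≤
        ENNReal.ofReal (exp (-c₂ * n)) := by
  classical
  obtain ⟨hα0, hα1⟩ := hα
  obtain ⟨hp0, hp1⟩ := hp
  -- constants
  set t : ℝ := min 1 ((1 - p) / (4 * p)) with htdef
  have ht0 : 0 < t := lt_min one_pos (div_pos (by linarith) (by linarith))
  have ht1 : t ≤ 1 := min_le_left _ _
  have htp : p * t ≤ (1 - p) / 4 := by
    have h1 : t ≤ (1 - p) / (4 * p) := min_le_right _ _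
    have h2 : p * t ≤ p * ((1 - p) / (4 * p)) := by
      apply mul_le_mul_of_nonneg_left h1 hp0.le
    calc p * t ≤ p * ((1 - p) / (4 * p)) := h2
      _ = (1 - p) / 4 := by field_simp
  set c₁ : ℝ := (1 + p) / 2 with hc₁def
  have hc₁0 : 0 < c₁ := by rw [hc₁def]; linarith
  have hc₁1 : c₁ < 1 := by rw [hc₁def]; linarith
  set c₂ : ℝ := t * (1 - p) / 8 with hc₂def
  have hc₂0 : 0 < c₂ := by
    rw [hc₂def]
    have : 0 < t * (1 - p) := mul_pos ht0 (by linarith)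
    linarith
  -- modified (honest Bernoulli) weights
  set φ : ℝ → ℝ := fun x => if x = 1 then 1 else 0 with hφdef
  have hφmeas : Measurable φ := by
    apply Measurable.ite _ measurable_const measurable_const
    exact measurableSet_eq
  set W : ℕ × ℕ → Ω → ℝ := fun v => φ ∘ w v with hWdef
  have hWmeas : ∀ v, Measurable (W v) := fun v => hφmeas.comp (hmeas v)
  have hWind : ProbabilityTheory.iIndepFun W μ :=
    hindep.comp (fun _ => φ) (fun _ => hφmeas)
  have hbd : ∀ v ω, W v ω = 0 ∨ W v ω = 1 := by
    intro v ω
    by_cases h : w v ω = 1 <;> simp [hWdef, hφdef, h]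
  set b : ℝ := 1 + (exp t - 1) * p with hbdef
  have hmgfW : ∀ v, ProbabilityTheory.mgf (W v) μ t = b := by
    intro v
    have hWeq : W v = ({ω | w v ω = 1}).indicator (fun _ => 1) := by
      funext ω
      by_cases h : w v ω = 1 <;>
        simp [hWdef, hφdef, h, Set.indicator, Set.mem_setOf_eq]
    have hA1 : MeasurableSet {ω | w v ω = 1} := hmeas v measurableSet_eq
    rw [hWeq]
    exact mgf_indicator hA1 hp0.le (hBer v).1
  have hexp1 : 1 + t ≤ exp t := by
    have := Real.add_one_le_exp t
    linarith
  have hb1 : 1 ≤ b := by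
    rw [hbdef]
    nlinarith
  have hb0 : 0 ≤ b := by linarith
  have hexpt : exp t - 1 ≤ t + t ^ 2 := by
    have h := Real.exp_bound' ht0.le ht1 (n := 2) (by norm_num)
    norm_num [Finset.sum_range_succ, Nat.factorial] at h
    nlinarith [h, sq_nonneg t]
  -- the almost sure event where all weights are 0/1
  set G : Set Ω := ⋂ v : ℕ × ℕ, ({ω | w v ω = 1} ∪ {ω | w v ω = 0}) with hGdef
  have hGc : μ Gᶜ = 0 := by
    rw [hGdef, Set.compl_iInter]
    refine measure_iUnion_null fun v => ?_
    have hA1 : MeasurableSet {ω | w v ω = 1} := hmeas v measurableSet_eq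
    have hA0 : MeasurableSet {ω | w v ω = 0} := hmeas v measurableSet_eq
    rw [prob_compl_eq_zero_iff (hA1.union hA0)]
    have hdisj : Disjoint {ω | w v ω = 1} {ω | w v ω = 0} := by
      rw [Set.disjoint_left]
      intro ω h1 h0
      simp only [Set.mem_setOf_eq] at h1 h0
      rw [h1] at h0
      norm_num at h0
    rw [measure_union hdisj hA0, (hBer v).1, (hBer v).2,
      ← ENNReal.ofReal_add hp0.le (by linarith)]
    norm_num
  have hWw : ∀ ω ∈ G, ∀ v, W v ω = w v ω := by
    intro ω hω v
    have hv := Set.mem_iInter.mp hω v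
    rcases hv with h1 | h0
    · simp only [Set.mem_setOf_eq] at h1
      simp [hWdef, hφdef, h1]
    · simp only [Set.mem_setOf_eq] at h0
      simp [hWdef, hφdef, h0]
  -- asymptotics
  obtain ⟨n₁, hn₁⟩ := eventually_rpow_log_le hα0 hα1 hc₂0
  refine ⟨c₁, ⟨hc₁0, hc₁1⟩, c₂, hc₂0, max 1 n₁, fun n hn => ?_⟩
  have hn1 : 1 ≤ n := le_trans (le_max_left _ _) hn
  have hn1R : (1 : ℝ) ≤ n := by exact_mod_cast hn1
  set m : ℕ := ⌊(n : ℝ) ^ α⌋₊ with hmdef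
  have hm1 : 1 ≤ m := by
    apply Nat.le_floor
    rw [Nat.cast_one]
    exact Real.one_le_rpow hn1R hα0.le
  have hnα : (n : ℝ) ^ α ≤ n := by
    calc (n : ℝ) ^ α ≤ (n : ℝ) ^ (1 : ℝ) :=
          Real.rpow_le_rpow_of_exponent_le hn1R hα1.le
      _ = n := Real.rpow_one _
  have hmn : m ≤ n := by
    have h := Nat.floor_mono hnα
    rwa [Nat.floor_natCast] at h
  have hmR : (m : ℝ) ≤ (n : ℝ) ^ α := Nat.floor_le (by positivity)
  set N : ℕ := n + m - 1 with hNdef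
  set D : Finset (Finset ℕ) := Finset.powersetCard (m - 1) (Finset.range (n + m - 2))
    with hDdef
  set Ev : Finset ℕ → Set Ω :=
    fun d => {ω | (c₁ * n : ℝ) ≤ ∑ v ∈ (Finset.range N).image (pathOf d), W v ω}
    with hEvdef
  -- union bound inclusion
  have hsubset : {ω | lastPassageTime n m (fun v => w v ω) ≥ c₁ * n}
      ⊆ (⋃ d ∈ D, Ev d) ∪ Gᶜ := by
    intro ω hω
    by_cases hωG : ω ∈ G
    swap
    · exact Or.inr hωG
    left
    rw [Set.mem_setOf_eq] at hω
    have hfunW : (fun v => w v ω) = fun v => W v ω :=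
      funext fun v => (hWw ω hωG v).symm
    rw [hfunW] at hω
    set f : {pa : ℕ → ℕ × ℕ // IsUpRightPath n m pa} → ℝ :=
      fun pa => ∑ i ∈ Finset.range (n + m - 1), W (pa.1 i) ω with hfdef
    have hω' : c₁ * n ≤ ⨆ pa, f pa := hω
    by_cases hne : Nonempty {pa : ℕ → ℕ × ℕ // IsUpRightPath n m pa}
    swap
    · rw [not_nonempty_iff] at hne
      rw [Real.iSup_of_isEmpty] at hω'
      exfalso
      nlinarith
    have hval : ∀ pa, ∃ k : ℕ, k ≤ N ∧ f pa = k := by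
      intro pa
      refine ⟨((Finset.range (n + m - 1)).filter (fun i => w (pa.1 i) ω = 1)).card, ?_, ?_⟩
      · calc ((Finset.range (n + m - 1)).filter (fun i => w (pa.1 i) ω = 1)).card
            ≤ (Finset.range (n + m - 1)).card := Finset.card_filter_le _ _
          _ = N := by rw [Finset.card_range]
      · rw [hfdef]
        have : ∀ i, W (pa.1 i) ω = if w (pa.1 i) ω = 1 then (1 : ℝ) else 0 := by
          intro i
          simp [hWdef, hφdef]
        simp only [this]
        rw [Finset.sum_boole]
    have hfin : (Set.range f).Finite := by
      apply Set.Finite.subset ((Set.finite_Icc 0 N).image (fun k : ℕ => (k : ℝ)))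
      rintro x ⟨pa, rfl⟩
      obtain ⟨k, hk, hfk⟩ := hval pa
      exact ⟨k, ⟨Nat.zero_le _, hk⟩, hfk.symm⟩
    have hmem : sSup (Set.range f) ∈ Set.range f :=
      (Set.range_nonempty f).csSup_mem hfin
    obtain ⟨pa, hpa⟩ := hmem
    have hge : c₁ * n ≤ f pa := by
      rw [hpa, sSup_range]
      exact hω'
    obtain ⟨d, hdD, hagree⟩ := exists_pathOf hn1 hm1 pa.2
    have hsum : f pa = ∑ v ∈ (Finset.range N).image (pathOf d), W v ω := by
      rw [Finset.sum_image (fun i _ j _ h => pathOf_injective d h), hfdef]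
      apply Finset.sum_congr rfl
      intro i hi
      rw [Finset.mem_range] at hi
      rw [hagree i (by omega)]
    refine Set.mem_biUnion hdD ?_
    rw [hEvdef, Set.mem_setOf_eq, ← hsum]
    exact hge
  -- the key real-number estimate
  have hL0 : 0 ≤ log (2 * n) := Real.log_nonneg (by linarith)
  have hfinal : (D.card : ℝ) * (exp (-t * (c₁ * n)) * b ^ N) ≤ exp (-c₂ * n) := by
    have h2n : (0 : ℝ) < 2 * n := by linarith
    -- bound on the number of paths
    have hDcard : (D.card : ℝ) ≤ exp ((m : ℝ) * log (2 * n)) := by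
      rw [hDdef, Finset.card_powersetCard, Finset.card_range]
      have hnat : Nat.choose (n + m - 2) (m - 1) ≤ (2 * n) ^ m := by
        calc Nat.choose (n + m - 2) (m - 1) ≤ (n + m - 2) ^ (m - 1) :=
              Nat.choose_le_pow _ _
          _ ≤ (2 * n) ^ (m - 1) := Nat.pow_le_pow_left (by omega) _
          _ ≤ (2 * n) ^ m := Nat.pow_le_pow_right (by omega) (by omega)
      have hcast : ((2 * n) ^ m : ℕ) = ((2 * (n : ℝ)) ^ m : ℝ) := by push_cast; ring
      calc (Nat.choose (n + m - 2) (m - 1) : ℝ) ≤ ((2 * n) ^ m : ℕ) := by exact_mod_cast hnat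
        _ = (2 * (n : ℝ)) ^ m := hcast
        _ = exp (log (2 * n)) ^ m := by rw [Real.exp_log h2n]
        _ = exp ((m : ℝ) * log (2 * n)) := by rw [← Real.exp_nat_mul]
    have hbN : b ^ N ≤ exp (p * (exp t - 1) * N) := by
      have hb : b ≤ exp ((exp t - 1) * p) := by
        have := Real.add_one_le_exp ((exp t - 1) * p)
        rw [hbdef]
        linarith
      calc b ^ N ≤ exp ((exp t - 1) * p) ^ N := pow_le_pow_left₀ hb0 hb N
        _ = exp ((N : ℝ) * ((exp t - 1) * p)) := by rw [Real.exp_nat_mul]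
        _ = exp (p * (exp t - 1) * N) := by ring_nf
    have hNR : (N : ℝ) = (n : ℝ) + m - 1 := by
      rw [hNdef]
      have : 1 ≤ n + m := by omega
      push_cast [Nat.cast_sub this]
      ring
    have hpe0 : 0 ≤ p * (exp t - 1) := by nlinarith
    have hpe : p * (exp t - 1) ≤ p * t + t * (1 - p) / 4 := by
      have h1 : p * (exp t - 1) ≤ p * (t + t ^ 2) :=
        mul_le_mul_of_nonneg_left hexpt hp0.le
      have h2 : p * t ^ 2 ≤ t * ((1 - p) / 4) := by
        have h3 : p * t ^ 2 = t * (p * t) := by ring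
        rw [h3]
        exact mul_le_mul_of_nonneg_left htp ht0.le
      linarith
    have hpe2 : p * (exp t - 1) ≤ 2 := by
      have h1 : p * t ≤ 1 := by linarith
      have h2 : t * (1 - p) ≤ 1 * 1 :=
        mul_le_mul ht1 (by linarith) (by linarith) (by norm_num)
      linarith
    have hexpo : (m : ℝ) * log (2 * n) + (-t * (c₁ * n)) + p * (exp t - 1) * N
        ≤ -c₂ * n := by
      have hsplit : p * (exp t - 1) * N
          = p * (exp t - 1) * n + p * (exp t - 1) * ((m : ℝ) - 1) := by
        rw [hNR]; ring
      have hm1R : (1 : ℝ) ≤ m := by exact_mod_cast hm1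
      have hterm2 : p * (exp t - 1) * ((m : ℝ) - 1) ≤ 2 * m := by
        nlinarith
      have hterm1 : p * (exp t - 1) * n ≤ (p * t + t * (1 - p) / 4) * n := by
        apply mul_le_mul_of_nonneg_right hpe (by linarith)
      have hcoeff : -t * (c₁ * n) + (p * t + t * (1 - p) / 4) * n
          = -(t * (1 - p) / 4) * n := by
        rw [hc₁def]; ring
      have hasym : (n : ℝ) ^ α * (log (2 * n) + 2) ≤ c₂ * n :=
        hn₁ n (le_trans (le_max_right _ _) hn)
      have hmlog : (m : ℝ) * log (2 * n) + 2 * m ≤ (n : ℝ) ^ α * (log (2 * n) + 2) := by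
        have : (m : ℝ) * log (2 * n) + 2 * m = (m : ℝ) * (log (2 * n) + 2) := by ring
        rw [this]
        apply mul_le_mul_of_nonneg_right hmR (by linarith)
      have hc₂' : t * (1 - p) / 4 = 2 * c₂ := by rw [hc₂def]; ring
      nlinarith
    calc (D.card : ℝ) * (exp (-t * (c₁ * n)) * b ^ N)
        ≤ exp ((m : ℝ) * log (2 * n)) * (exp (-t * (c₁ * n)) * exp (p * (exp t - 1) * N)) := by
          apply mul_le_mul hDcard _ (by positivity) (exp_pos _).le
          apply mul_le_mul_of_nonneg_left hbN (exp_pos _).le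
      _ = exp ((m : ℝ) * log (2 * n) + (-t * (c₁ * n)) + p * (exp t - 1) * N) := by
          rw [← Real.exp_add, ← Real.exp_add, add_assoc]
      _ ≤ exp (-c₂ * n) := exp_le_exp.mpr hexpo
  -- put everything together
  calc μ {ω | lastPassageTime n m (fun v => w v ω) ≥ c₁ * n}
      ≤ μ ((⋃ d ∈ D, Ev d) ∪ Gᶜ) := measure_mono hsubset
    _ ≤ μ (⋃ d ∈ D, Ev d) + μ Gᶜ := measure_union_le _ _
    _ = μ (⋃ d ∈ D, Ev d) := by rw [hGc, add_zero]
    _ ≤ ∑ d ∈ D, μ (Ev d) := measure_biUnion_finset_le D Ev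
    _ ≤ ∑ _d ∈ D, ENNReal.ofReal (exp (-t * (c₁ * n)) * b ^ N) := by
        apply Finset.sum_le_sum
        intro d _
        have h := chernoff_sum hWmeas hWind hbd ht0.le hmgfW
          ((Finset.range N).image (pathOf d)) (c₁ * n)
        rw [Finset.card_image_of_injective _ (pathOf_injective d), Finset.card_range] at h
        exact h
    _ = D.card * ENNReal.ofReal (exp (-t * (c₁ * n)) * b ^ N) := by
        rw [Finset.sum_const, nsmul_eq_mul]
    _ ≤ ENNReal.ofReal (exp (-c₂ * n)) := by
        have hDof : (D.card : ENNReal) = ENNReal.ofReal ((D.card : ℝ)) := by simp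
        rw [hDof, ← ENNReal.ofReal_mul (by positivity : (0:ℝ) ≤ (D.card : ℝ))]
        exact ENNReal.ofReal_le_ofReal hfinal
end

section
/- In directed site last passage percolation on the n × ⌊n^α⌋ grid, suppose configuration W^{k+1} is obtained from W^k by changing one uniformly chosen lo-mode vertex (out of n^{1+α} − k lo-mode vertices) to a hi-mode weight sampled from F conditioned on hi mode. If every geodesic under W^k contains at least n + ⌊n^α⌋ − M_n(k) lo-mode vertices, then E(L_n(k+1) − L_n(k) | W^k) ≥ ((n + ⌊n^α⌋ − M_n(k))/(n^{1+α} − k)) · (E(w | hi) − m). -/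
open MeasureTheory Real Set

namespace Stmt17

variable {n t : ℕ}

lemma coordSum {pa} (h : IsUpRightPath n t pa) :
    ∀ i, i ≤ n + t - 2 → (pa i).1 + (pa i).2 = i + 2 := by
  intro i
  induction i with
  | zero => intro _; rw [h.1]; rfl
  | succ i ih =>
      intro hi
      have hi' : i < n + t - 2 := by omega
      have := ih (by omega)
      rcases h.2.2 i hi' with hs | hs <;> rw [hs] <;> simp <;> omega

lemma mono1 {pa} (h : IsUpRightPath n t pa) :
    ∀ i j, i ≤ j → j ≤ n + t - 2 → (pa i).1 ≤ (pa j).1 ∧ (pa i).2 ≤ (pa j).2 := by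
  intro i j hij
  induction j with
  | zero =>
      intro _
      rw [Nat.le_zero.mp hij]
      exact ⟨le_rfl, le_rfl⟩
  | succ j ih =>
      intro hj
      rcases Nat.lt_or_ge i (j+1) with hlt | hge
      · have hij' : i ≤ j := by omega
        have h1 := ih hij' (by omega)
        have hj' : j < n + t - 2 := by omega
        rcases h.2.2 j hj' with hs | hs <;> rw [hs] <;>
          exact ⟨h1.1.trans (by omega), h1.2.trans (by omega)⟩
      · have : i = j + 1 := by omega
        subst this; exact ⟨le_rfl, le_rfl⟩

lemma mem_grid (hn : 1 ≤ n) (ht : 1 ≤ t) {pa} (h : IsUpRightPath n t pa) :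
    ∀ i, i ≤ n + t - 2 → pa i ∈ (Finset.Icc 1 n) ×ˢ (Finset.Icc 1 t) := by
  intro i hi
  have h1 := mono1 h 0 i (by omega) hi
  have h2 := mono1 h i (n + t - 2) hi le_rfl
  rw [h.1] at h1
  rw [h.2.1] at h2
  simp only [Finset.mem_product, Finset.mem_Icc]
  exact ⟨⟨h1.1, h2.1⟩, ⟨h1.2, h2.2⟩⟩

lemma path_injOn {pa} (h : IsUpRightPath n t pa) {i j : ℕ}
    (hi : i ≤ n + t - 2) (hj : j ≤ n + t - 2) (hij : pa i = pa j) : i = j := by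
  have h1 := coordSum h i hi
  have h2 := coordSum h j hj
  rw [hij] at h1; omega

def pa0 (n : ℕ) : ℕ → ℕ × ℕ := fun i => if i < n then (i + 1, 1) else (n, i - n + 2)

lemma pa0_path (hn : 1 ≤ n) (ht : 1 ≤ t) : IsUpRightPath n t (pa0 n) := by
  refine ⟨by simp [pa0]; omega, ?_, ?_⟩
  · by_cases hc : n + t - 2 < n
    · have h1 : t = 1 := by omega
      have : n + t - 2 = n - 1 := by omega
      simp only [pa0, this, if_pos (by omega : n - 1 < n)]
      rw [h1]; congr 1; omega
    · simp only [pa0, if_neg hc]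
      congr 1; omega
  · intro i hi
    by_cases hc : i + 1 < n
    · left
      have h1 : i < n := by omega
      simp only [pa0, if_pos hc, if_pos h1]
    · by_cases hc2 : i < n
      · right
        have h3 : ¬ (i + 1 < n) := hc
        simp only [pa0, if_neg h3, if_pos hc2]
        have : i + 1 = n := by omega
        subst this
        simp
      · right
        have h3 : ¬ (i + 1 < n) := by omega
        simp only [pa0, if_neg h3, if_neg hc2]
        have : i + 1 - n + 2 = (i - n + 2) + 1 := by omega
        rw [this]

end Stmt17

namespace Stmt17

def restr (n t : ℕ) (pa : ℕ → ℕ × ℕ) : Fin (n + t - 1) → ℕ × ℕ := fun i => pa i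

def Q (n t : ℕ) : Set (Fin (n + t - 1) → ℕ × ℕ) :=
  {f | ∃ pa, IsUpRightPath n t pa ∧ f = restr n t pa}

lemma Q_finite (hn : 1 ≤ n) (ht : 1 ≤ t) : (Q n t).Finite := by
  have hsub : Q n t ⊆ Set.pi Set.univ
      (fun _ : Fin (n + t - 1) => (Set.Icc ((1 : ℕ), (1 : ℕ)) (n, t))) := by
    rintro f ⟨pa, hpa, rfl⟩ i _
    have hlt := i.isLt
    have hi : (i : ℕ) ≤ n + t - 2 := by omega
    have hmem := mem_grid hn ht hpa i hi
    simp only [Finset.mem_product, Finset.mem_Icc] at hmem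
    exact ⟨⟨hmem.1.1, hmem.2.1⟩, ⟨hmem.1.2, hmem.2.2⟩⟩
  exact (Set.Finite.pi (fun _ => Set.finite_Icc _ _)).subset hsub

lemma Q_nonempty (hn : 1 ≤ n) (ht : 1 ≤ t) : (Q n t).Nonempty :=
  ⟨restr n t (pa0 n), pa0 n, pa0_path hn ht, rfl⟩

noncomputable def sumOn (n t : ℕ) (w : ℕ × ℕ → ℝ) (f : Fin (n + t - 1) → ℕ × ℕ) : ℝ :=
  ∑ i, w (f i)

lemma sum_eq_sumOn (w : ℕ × ℕ → ℝ) (pa : ℕ → ℕ × ℕ) :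
    ∑ i ∈ Finset.range (n + t - 1), w (pa i) = sumOn n t w (restr n t pa) :=
  (Fin.sum_univ_eq_sum_range (fun i => w (pa i)) (n + t - 1)).symm

lemma lpt_eq_sSup (w : ℕ × ℕ → ℝ) :
    lastPassageTime n t w = sSup (sumOn n t w '' Q n t) := by
  have : Set.range (fun pa : {pa : ℕ → ℕ × ℕ // IsUpRightPath n t pa} =>
      ∑ i ∈ Finset.range (n + t - 1), w (pa.1 i)) = sumOn n t w '' Q n t := by
    ext x
    constructor
    · rintro ⟨pa, rfl⟩
      exact ⟨restr n t pa.1, ⟨pa.1, pa.2, rfl⟩, (sum_eq_sumOn w pa.1).symm⟩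
    · rintro ⟨f, ⟨pa, hpa, rfl⟩, rfl⟩
      exact ⟨⟨pa, hpa⟩, sum_eq_sumOn w pa⟩
  rw [lastPassageTime, iSup, this]

lemma sum_le_lpt (hn : 1 ≤ n) (ht : 1 ≤ t) (w : ℕ × ℕ → ℝ) {pa : ℕ → ℕ × ℕ}
    (hpa : IsUpRightPath n t pa) :
    ∑ i ∈ Finset.range (n + t - 1), w (pa i) ≤ lastPassageTime n t w := by
  rw [lpt_eq_sSup, sum_eq_sumOn]
  exact le_csSup (((Q_finite hn ht).image _).bddAbove) ⟨restr n t pa, ⟨pa, hpa, rfl⟩, rfl⟩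

lemma exists_geodesic (hn : 1 ≤ n) (ht : 1 ≤ t) (w : ℕ × ℕ → ℝ) :
    ∃ pa, IsUpRightPath n t pa ∧
      (∑ i ∈ Finset.range (n + t - 1), w (pa i)) = lastPassageTime n t w := by
  have hfin : (sumOn n t w '' Q n t).Finite := (Q_finite hn ht).image _
  have hne : (sumOn n t w '' Q n t).Nonempty := (Q_nonempty hn ht).image _
  have hmem := hne.csSup_mem hfin
  rw [← lpt_eq_sSup] at hmem
  obtain ⟨f, ⟨pa, hpa, rfl⟩, hval⟩ := hmem
  exact ⟨pa, hpa, by rw [sum_eq_sumOn]; exact hval⟩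

lemma measurable_sup'_aux {ι : Type*} (g : ι → (ℕ × ℕ → ℝ) → ℝ) (hg : ∀ i, Measurable (g i)) :
    ∀ (s : Finset ι) (hs : s.Nonempty), Measurable (fun w => s.sup' hs (fun i => g i w)) := by
  intro s hs
  induction hs using Finset.Nonempty.cons_induction with
  | singleton i =>
      have : (fun w => ({i} : Finset ι).sup' (Finset.singleton_nonempty i) (fun j => g j w)) = g i :=
        funext fun w => Finset.sup'_singleton ..
      rw [this]; exact hg i
  | cons i s hi hne ih =>
      have heq : (fun w => (Finset.cons i s hi).sup' (Finset.cons_nonempty hi) (fun j => g j w)) =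
          (fun w => g i w ⊔ s.sup' hne (fun j => g j w)) :=
        funext fun w => Finset.sup'_cons hne _
      rw [heq]
      exact (hg i).sup ih

lemma lpt_measurable (hn : 1 ≤ n) (ht : 1 ≤ t) : Measurable (lastPassageTime n t) := by
  classical
  have hQf := Q_finite hn ht
  have hQne : hQf.toFinset.Nonempty := by
    rw [Set.Finite.toFinset_nonempty]; exact Q_nonempty hn ht
  have key : lastPassageTime n t = fun w => hQf.toFinset.sup' hQne (fun f => sumOn n t w f) := by
    funext w
    rw [Finset.sup'_eq_csSup_image, lpt_eq_sSup, hQf.coe_toFinset]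
  rw [key]
  exact measurable_sup'_aux _ (fun f => by
    unfold sumOn
    exact Finset.measurable_sum _ (fun i _ => measurable_pi_apply (f i))) _ hQne

lemma lpt_le (hn : 1 ≤ n) (ht : 1 ≤ t) {w : ℕ × ℕ → ℝ} {C : ℝ} (hw : ∀ v, w v ∈ Set.Icc 0 C) :
    lastPassageTime n t w ≤ (n + t - 1 : ℕ) * C := by
  obtain ⟨pa, hpa, hsum⟩ := exists_geodesic hn ht w
  rw [← hsum]
  calc ∑ i ∈ Finset.range (n + t - 1), w (pa i) ≤ ∑ _i ∈ Finset.range (n + t - 1), C :=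
        Finset.sum_le_sum (fun i _ => (hw (pa i)).2)
    _ = (n + t - 1 : ℕ) * C := by rw [Finset.sum_const, Finset.card_range, nsmul_eq_mul]

lemma lpt_nonneg (hn : 1 ≤ n) (ht : 1 ≤ t) {w : ℕ × ℕ → ℝ} (hw : ∀ v, 0 ≤ w v) :
    0 ≤ lastPassageTime n t w := by
  refine le_trans ?_ (sum_le_lpt hn ht w (pa0_path hn ht))
  exact Finset.sum_nonneg (fun i _ => hw _)

def grid (n t : ℕ) : Finset (ℕ × ℕ) := (Finset.Icc 1 n) ×ˢ (Finset.Icc 1 t)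

def Sgeo (n t : ℕ) (m : ℝ) (w : ℕ × ℕ → ℝ) : Set (ℕ × ℕ) :=
  {v | v ∈ grid n t ∧ w v ≤ m ∧ ∃ pa, IsUpRightPath n t pa ∧
    (∑ i ∈ Finset.range (n + t - 1), w (pa i)) = lastPassageTime n t w ∧ ∃ i < n + t - 1, pa i = v}

lemma mem_Sgeo_iff {m : ℝ} {w : ℕ × ℕ → ℝ} {v : ℕ × ℕ} :
    v ∈ Sgeo n t m w ↔ v ∈ grid n t ∧ w v ≤ m ∧
      ∃ f ∈ Q n t, sumOn n t w f = lastPassageTime n t w ∧ ∃ i, f i = v := by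
  constructor
  · rintro ⟨hg, hle, pa, hpa, hsum, i, hi, rfl⟩
    exact ⟨hg, hle, restr n t pa, ⟨pa, hpa, rfl⟩,
      by rw [← sum_eq_sumOn]; exact hsum, ⟨i, hi⟩, rfl⟩
  · rintro ⟨hg, hle, f, ⟨pa, hpa, rfl⟩, hsum, i, hfi⟩
    exact ⟨hg, hle, pa, hpa, by rw [sum_eq_sumOn]; exact hsum, i, i.isLt, hfi⟩

lemma measurable_sumOn (f : Fin (n + t - 1) → ℕ × ℕ) :
    Measurable (fun w : ℕ × ℕ → ℝ => sumOn n t w f) := by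
  unfold sumOn
  exact Finset.measurable_sum _ (fun i _ => measurable_pi_apply (f i))

lemma measurable_sgeo (hn : 1 ≤ n) (ht : 1 ≤ t) (m : ℝ) (v : ℕ × ℕ) :
    MeasurableSet {w : ℕ × ℕ → ℝ | v ∈ Sgeo n t m w} := by
  have hset : {w : ℕ × ℕ → ℝ | v ∈ Sgeo n t m w} =
      {w : ℕ × ℕ → ℝ | v ∈ grid n t} ∩ ({w | w v ≤ m} ∩
        ⋃ f ∈ Q n t, ({w | sumOn n t w f = lastPassageTime n t w} ∩ {_w | ∃ i, f i = v})) := by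
    ext w
    simp only [Set.mem_setOf_eq, Set.mem_inter_iff, Set.mem_iUnion, mem_Sgeo_iff]
    tauto
  rw [hset]
  refine (MeasurableSet.const _).inter (MeasurableSet.inter ?_ ?_)
  · exact measurableSet_le (measurable_pi_apply v) measurable_const
  · refine MeasurableSet.biUnion ((Q_finite hn ht).countable) (fun f _ => ?_)
    exact (measurableSet_eq_fun (measurable_sumOn f) (lpt_measurable hn ht)).inter
      (MeasurableSet.const _)

open Classical in
noncomputable def cardS (n t : ℕ) (m : ℝ) (w : ℕ × ℕ → ℝ) : ℕ :=
  ((grid n t).filter (fun v => v ∈ Sgeo n t m w)).card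

open Classical in
lemma cardS_eq_sum (m : ℝ) (w : ℕ × ℕ → ℝ) :
    (cardS n t m w : ℝ) = ∑ v ∈ grid n t, if v ∈ Sgeo n t m w then (1 : ℝ) else 0 := by
  rw [cardS, Finset.card_filter]
  push_cast
  rfl

lemma measurable_cardS (hn : 1 ≤ n) (ht : 1 ≤ t) (m : ℝ) :
    Measurable (fun w => (cardS n t m w : ℝ)) := by
  simp_rw [cardS_eq_sum]
  exact Finset.measurable_sum _ (fun v _ =>
    Measurable.ite (measurable_sgeo hn ht m v) measurable_const measurable_const)

lemma lpt_mono (hn : 1 ≤ n) (ht : 1 ≤ t) {w w' : ℕ × ℕ → ℝ} (h : ∀ v, w v ≤ w' v) :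
    lastPassageTime n t w ≤ lastPassageTime n t w' := by
  obtain ⟨pa, hpa, hsum⟩ := exists_geodesic hn ht w
  rw [← hsum]
  exact le_trans (Finset.sum_le_sum (fun i _ => h (pa i))) (sum_le_lpt hn ht w' hpa)

end Stmt17

open Stmt17

/-- One step of the flipping scheme: `W^{k+1}` is obtained from `W^k` by changing one
uniformly chosen lo-mode vertex (among the `n^{1+α} − k` lo-mode vertices) to a hi-mode
weight with mean `E(w|hi)`.  If every geodesic under `W^k` contains at least
`n + ⌊n^α⌋ − M_n(k)` lo-mode vertices, then
`E(L_n(k+1) − L_n(k) | W^k) ≥ ((n + ⌊n^α⌋ − M_n(k)) / (n^{1+α} − k)) (E(w|hi) − m)`. -/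
theorem stmt17
    {Ω : Type*} {mΩ : MeasurableSpace Ω} (μ : Measure Ω) [IsProbabilityMeasure μ]
    (n k : ℕ) (α m C Ehi : ℝ) (hα : α ∈ Ioo (0 : ℝ) 1) (hm : 0 < m) (hmC : m < C)
    (hk : k < n * ⌊(n : ℝ) ^ α⌋₊)
    (Wk : Ω → (ℕ × ℕ → ℝ)) (hWk : Measurable Wk)
    (U : Ω → ℕ × ℕ) (hU : Measurable U)
    (Z : Ω → ℝ) (hZ : Measurable Z)
    -- weights are supported in [0, C]
    (hbdd : ∀ ω v, Wk ω v ∈ Icc (0 : ℝ) C) (hZbdd : ∀ ω, Z ω ∈ Icc (0 : ℝ) C)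
    -- the new weight is in hi mode, is (conditionally) independent of `(W^k, U)`,
    -- and has mean `E(w|hi) = Ehi`
    (hZhi : ∀ ω, m < Z ω)
    (hZindep : ProbabilityTheory.IndepFun Z (fun ω => (Wk ω, U ω)) μ)
    (hZmean : ∫ ω, Z ω ∂μ = Ehi)
    -- there are exactly `n^{1+α} − k` lo-mode vertices in `W^k`
    (hcard : ∀ ω,
      (((Finset.Icc 1 n) ×ˢ (Finset.Icc 1 ⌊(n : ℝ) ^ α⌋₊)).filter
        (fun v => Wk ω v ≤ m)).card = n * ⌊(n : ℝ) ^ α⌋₊ - k)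
    -- conditionally on `W^k`, the flipped vertex `U` is uniform on the lo-mode vertices
    (hUunif : ∀ v : ℕ × ℕ, ∀ A : Set Ω,
      MeasurableSet[MeasurableSpace.comap Wk inferInstance] A →
      μ ({ω | U ω = v} ∩ A) =
        ∫⁻ ω in A,
          (if v ∈ ((Finset.Icc 1 n) ×ˢ (Finset.Icc 1 ⌊(n : ℝ) ^ α⌋₊)) ∧ Wk ω v ≤ m
            then ((n * ⌊(n : ℝ) ^ α⌋₊ - k : ℕ) : ENNReal)⁻¹ else 0) ∂μ)
    -- every geodesic under `W^k` contains at least `n + ⌊n^α⌋ − M_n(k)` lo-mode vertices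
    (hgeo : ∀ ω, ∀ pa : ℕ → ℕ × ℕ, IsUpRightPath n ⌊(n : ℝ) ^ α⌋₊ pa →
      (∑ i ∈ Finset.range (n + ⌊(n : ℝ) ^ α⌋₊ - 1), Wk ω (pa i)) =
        lastPassageTime n ⌊(n : ℝ) ^ α⌋₊ (Wk ω) →
      ((n : ℝ) + ⌊(n : ℝ) ^ α⌋₊ -
          lastPassageTime n ⌊(n : ℝ) ^ α⌋₊ (fun v => if m < Wk ω v then 1 else 0)) ≤
        (((Finset.range (n + ⌊(n : ℝ) ^ α⌋₊ - 1)).filter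
          (fun i => Wk ω (pa i) ≤ m)).card : ℝ)) :
    (fun ω =>
        ((n : ℝ) + ⌊(n : ℝ) ^ α⌋₊ -
            lastPassageTime n ⌊(n : ℝ) ^ α⌋₊ (fun v => if m < Wk ω v then 1 else 0)) /
          ((n * ⌊(n : ℝ) ^ α⌋₊ : ℕ) - (k : ℝ)) * (Ehi - m)) ≤ᵐ[μ]
      μ[(fun ω =>
          lastPassageTime n ⌊(n : ℝ) ^ α⌋₊ (Function.update (Wk ω) (U ω) (Z ω)) -
            lastPassageTime n ⌊(n : ℝ) ^ α⌋₊ (Wk ω)) |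
        MeasurableSpace.comap Wk inferInstance] := by
  classical
  set t := ⌊(n : ℝ) ^ α⌋₊ with ht_def
  have hnt : 0 < n * t := by
    rcases Nat.eq_zero_or_pos (n * t) with h0 | h1
    · rw [h0] at hk; exact absurd hk (Nat.not_lt_zero k)
    · exact h1
  have hn : 1 ≤ n := by
    rcases Nat.eq_zero_or_pos n with h0 | h1
    · rw [h0, zero_mul] at hnt; exact absurd hnt (lt_irrefl 0)
    · exact h1
  have ht1 : 1 ≤ t := by
    rcases Nat.eq_zero_or_pos t with h0 | h1
    · rw [h0, mul_zero] at hnt; exact absurd hnt (lt_irrefl 0)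
    · exact h1
  set N := n * t - k with hN_def
  have hNpos : 0 < N := by omega
  have hNreal : ((n * t : ℕ) : ℝ) - (k : ℝ) = (N : ℝ) := by
    rw [hN_def]; push_cast [Nat.cast_sub hk.le]; ring
  have hNRpos : (0 : ℝ) < (N : ℝ) := by exact_mod_cast hNpos
  have hC0 : (0 : ℝ) < C := hm.trans hmC
  have hm'le : MeasurableSpace.comap Wk inferInstance ≤ mΩ := hWk.comap_le
  have hWkm' : Measurable[MeasurableSpace.comap Wk inferInstance] Wk :=
    fun s hs => ⟨s, hs, rfl⟩
  have hZint : Integrable Z μ := by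
    refine (integrable_const C).mono' hZ.aestronglyMeasurable (ae_of_all _ fun ω => ?_)
    rw [Real.norm_eq_abs, abs_of_nonneg (hZbdd ω).1]; exact (hZbdd ω).2
  have hEhi : m ≤ Ehi := by
    rw [← hZmean]
    calc m = ∫ _ω, m ∂μ := by simp
      _ ≤ ∫ ω, Z ω ∂μ := integral_mono (integrable_const m) hZint (fun ω => (hZhi ω).le)
  set g : Ω → ℝ := fun ω =>
    lastPassageTime n t (Function.update (Wk ω) (U ω) (Z ω)) - lastPassageTime n t (Wk ω)
    with hg_def
  set h : Ω → ℝ := fun ω =>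
    (Z ω - m) * (if U ω ∈ Sgeo n t m (Wk ω) then (1 : ℝ) else 0) with hh_def
  set ψ : (ℕ × ℕ → ℝ) → ℝ := fun w => (Ehi - m) / (N : ℝ) * (cardS n t m w : ℝ) with hψ_def
  have hupdate : Measurable (fun ω => Function.update (Wk ω) (U ω) (Z ω)) := by
    refine measurable_pi_lambda _ (fun v => ?_)
    have heq : (fun ω => Function.update (Wk ω) (U ω) (Z ω) v) =
        fun ω => if v = U ω then Z ω else Wk ω v := by
      funext ω; rw [Function.update_apply]
    rw [heq]
    have hsv : MeasurableSet {ω | v = U ω} := by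
      have h1 := hU (measurableSet_singleton v)
      have h2 : {ω | v = U ω} = U ⁻¹' {v} := by ext ω; simp [eq_comm]
      rw [h2]; exact h1
    exact Measurable.ite hsv hZ ((measurable_pi_apply v).comp hWk)
  have hgmeas : Measurable g :=
    ((lpt_measurable hn ht1).comp hupdate).sub ((lpt_measurable hn ht1).comp hWk)
  have hVv : ∀ v : ℕ × ℕ, MeasurableSet {ω | v ∈ Sgeo n t m (Wk ω)} := fun v =>
    hWk (measurable_sgeo hn ht1 m v)
  have hχset : MeasurableSet {ω | U ω ∈ Sgeo n t m (Wk ω)} := by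
    have heq : {ω | U ω ∈ Sgeo n t m (Wk ω)} =
        ⋃ v : ℕ × ℕ, ({ω | v ∈ Sgeo n t m (Wk ω)} ∩ {ω | U ω = v}) := by
      ext ω; simp only [Set.mem_setOf_eq, Set.mem_iUnion, Set.mem_inter_iff]
      exact ⟨fun hx => ⟨U ω, hx, rfl⟩, fun ⟨v, hv, he⟩ => he ▸ hv⟩
    rw [heq]
    exact MeasurableSet.iUnion fun v => (hVv v).inter (hU (measurableSet_singleton v))
  have hhmeas : Measurable h :=
    (hZ.sub measurable_const).mul (Measurable.ite hχset measurable_const measurable_const)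
  have hwleK : ∀ ω, lastPassageTime n t (Wk ω) ∈ Icc (0 : ℝ) ((n + t - 1 : ℕ) * C) :=
    fun ω => ⟨lpt_nonneg hn ht1 (fun v => (hbdd ω v).1), lpt_le hn ht1 (hbdd ω)⟩
  have huleK : ∀ ω, lastPassageTime n t (Function.update (Wk ω) (U ω) (Z ω)) ∈
      Icc (0 : ℝ) ((n + t - 1 : ℕ) * C) := by
    intro ω
    have hbd : ∀ v, Function.update (Wk ω) (U ω) (Z ω) v ∈ Icc (0 : ℝ) C := by
      intro v
      rw [Function.update_apply]
      split
      · exact hZbdd ω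
      · exact hbdd ω v
    exact ⟨lpt_nonneg hn ht1 (fun v => (hbd v).1), lpt_le hn ht1 hbd⟩
  have hgint : Integrable g μ := by
    refine (integrable_const ((n + t - 1 : ℕ) * C)).mono' hgmeas.aestronglyMeasurable
      (ae_of_all _ fun ω => ?_)
    have h1 := hwleK ω; have h2 := huleK ω
    simp only [Set.mem_Icc] at h1 h2
    rw [Real.norm_eq_abs, hg_def, abs_sub_le_iff]
    constructor <;> linarith [h1.1, h1.2, h2.1, h2.2]
  have hhint : Integrable h μ := by
    refine (integrable_const (C + m)).mono' hhmeas.aestronglyMeasurable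
      (ae_of_all _ fun ω => ?_)
    rw [Real.norm_eq_abs, hh_def]
    have h1 := hZbdd ω
    simp only [Set.mem_Icc] at h1
    rw [abs_mul]
    have habs : |Z ω - m| ≤ C + m := by rw [abs_sub_le_iff]; constructor <;> linarith
    have h2 : |if U ω ∈ Sgeo n t m (Wk ω) then (1 : ℝ) else 0| ≤ 1 := by
      split <;> simp
    calc |Z ω - m| * |if U ω ∈ Sgeo n t m (Wk ω) then (1 : ℝ) else 0|
        ≤ (C + m) * 1 := mul_le_mul habs h2 (abs_nonneg _) (by linarith)
      _ = C + m := mul_one _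
  have hae : ∀ᵐ ω ∂μ, U ω ∈ grid n t ∧ Wk ω (U ω) ≤ m := by
    rw [MeasureTheory.ae_iff]
    have hsub : {ω | ¬(U ω ∈ grid n t ∧ Wk ω (U ω) ≤ m)} ⊆
        ⋃ v : ℕ × ℕ, ({ω | U ω = v} ∩ (Wk ⁻¹' {w | ¬(v ∈ grid n t ∧ w v ≤ m)})) := by
      intro ω hω
      exact Set.mem_iUnion.mpr ⟨U ω, rfl, hω⟩
    refine measure_mono_null hsub (measure_iUnion_null fun v => ?_)
    have hB : MeasurableSet {w : ℕ × ℕ → ℝ | ¬(v ∈ grid n t ∧ w v ≤ m)} := by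
      have heq : {w : ℕ × ℕ → ℝ | ¬(v ∈ grid n t ∧ w v ≤ m)} =
          ({w : ℕ × ℕ → ℝ | v ∈ grid n t} ∩ {w | w v ≤ m})ᶜ := by
        ext w
        simp only [Set.mem_setOf_eq, Set.mem_compl_iff, Set.mem_inter_iff]
      rw [heq]
      exact ((MeasurableSet.const _).inter
        (measurableSet_le (measurable_pi_apply v) measurable_const)).compl
    have hu := hUunif v (Wk ⁻¹' {w | ¬(v ∈ grid n t ∧ w v ≤ m)}) ⟨_, hB, rfl⟩
    rw [hu]
    have hzero : ∀ ω ∈ Wk ⁻¹' {w | ¬(v ∈ grid n t ∧ w v ≤ m)},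
        (if v ∈ ((Finset.Icc 1 n) ×ˢ (Finset.Icc 1 t)) ∧ Wk ω v ≤ m
          then ((N : ℕ) : ENNReal)⁻¹ else 0) = 0 := by
      intro ω hω
      rw [if_neg]
      exact hω
    rw [setLIntegral_congr_fun (hWk hB) hzero, lintegral_zero]
  have hhg : h ≤ᵐ[μ] g := by
    filter_upwards [hae] with ω hω
    obtain ⟨hUg, hUlo⟩ := hω
    have hupge : ∀ v, Wk ω v ≤ Function.update (Wk ω) (U ω) (Z ω) v := by
      intro v
      rw [Function.update_apply]
      split
      · rename_i hv
        rw [hv]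
        exact le_trans hUlo (le_of_lt (hZhi ω))
      · exact le_rfl
    by_cases hcase : U ω ∈ Sgeo n t m (Wk ω)
    · obtain ⟨hg1, hlo, pa, hpa, hsum, i0, hi0, hpai0⟩ := hcase
      have hdiff : Z ω - m ≤ ∑ i ∈ Finset.range (n + t - 1),
          (Function.update (Wk ω) (U ω) (Z ω) (pa i) - Wk ω (pa i)) := by
        have hterm : Z ω - m ≤ Function.update (Wk ω) (U ω) (Z ω) (pa i0) - Wk ω (pa i0) := by
          rw [hpai0, Function.update_self]
          linarith [hUlo]
        refine le_trans hterm
          (Finset.single_le_sum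
            (f := fun i => Function.update (Wk ω) (U ω) (Z ω) (pa i) - Wk ω (pa i))
            (fun i _ => sub_nonneg.mpr (hupge (pa i))) (Finset.mem_range.mpr hi0))
      rw [Finset.sum_sub_distrib] at hdiff
      have hle2 := sum_le_lpt hn ht1 (Function.update (Wk ω) (U ω) (Z ω)) hpa
      have hcase' : U ω ∈ Sgeo n t m (Wk ω) := ⟨hg1, hlo, pa, hpa, hsum, i0, hi0, hpai0⟩
      simp only [hh_def, hg_def, if_pos hcase', mul_one]
      linarith
    · simp only [hh_def, hg_def, if_neg hcase, mul_zero]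
      have hmle := lpt_mono hn ht1 hupge
      linarith
  have hψWk_meas : Measurable (fun ω => ψ (Wk ω)) :=
    (((measurable_cardS hn ht1 m).const_mul _)).comp hWk
  have hψint : Integrable (fun ω => ψ (Wk ω)) μ := by
    refine (integrable_const (|Ehi - m| / (N : ℝ) * ((grid n t).card : ℝ))).mono'
      hψWk_meas.aestronglyMeasurable (ae_of_all _ fun ω => ?_)
    have e1 : |((N : ℝ))| = (N : ℝ) := abs_of_nonneg (Nat.cast_nonneg N)
    have e2 : |((cardS n t m (Wk ω) : ℝ))| = (cardS n t m (Wk ω) : ℝ) :=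
      abs_of_nonneg (Nat.cast_nonneg _)
    rw [Real.norm_eq_abs, hψ_def, abs_mul, abs_div, e1, e2]
    have hcle : (cardS n t m (Wk ω) : ℝ) ≤ ((grid n t).card : ℝ) := by
      exact_mod_cast Finset.card_filter_le _ _
    have hnn : 0 ≤ |Ehi - m| / (N : ℝ) := by positivity
    exact mul_le_mul_of_nonneg_left hcle hnn
  have hT : MeasurableSet {p : (ℕ × ℕ → ℝ) × (ℕ × ℕ) | p.2 ∈ Sgeo n t m p.1} := by
    have heq : {p : (ℕ × ℕ → ℝ) × (ℕ × ℕ) | p.2 ∈ Sgeo n t m p.1} =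
        ⋃ v : ℕ × ℕ, ({w | v ∈ Sgeo n t m w} ×ˢ ({v} : Set (ℕ × ℕ))) := by
      ext p
      simp only [Set.mem_setOf_eq, Set.mem_iUnion, Set.mem_prod, Set.mem_singleton_iff]
      exact ⟨fun hp => ⟨p.2, hp, rfl⟩, fun ⟨v, hv, he⟩ => by rw [he]; exact hv⟩
    rw [heq]
    exact MeasurableSet.iUnion fun v =>
      (measurable_sgeo hn ht1 m v).prod (measurableSet_singleton v)
  have hIv : ∀ v : ℕ × ℕ,
      Integrable (fun ω => if v ∈ Sgeo n t m (Wk ω) then (1 : ℝ) else 0) μ := by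
    intro v
    refine (integrable_const (1 : ℝ)).mono'
      ((Measurable.ite (hVv v) measurable_const measurable_const).aestronglyMeasurable)
      (ae_of_all _ fun ω => ?_)
    rw [Real.norm_eq_abs]
    split <;> simp
  have hcond : (fun ω => ψ (Wk ω)) =ᵐ[μ] μ[h | MeasurableSpace.comap Wk inferInstance] := by
    have hψm' : Measurable[MeasurableSpace.comap Wk inferInstance] (fun ω => ψ (Wk ω)) :=
      (((measurable_cardS hn ht1 m).const_mul _)).comp hWkm'
    refine ae_eq_condExp_of_forall_setIntegral_eq hm'le hhint
      (fun s hs hμs => hψint.integrableOn) (fun s hs hμs => ?_)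
      ⟨fun ω => ψ (Wk ω), hψm'.stronglyMeasurable, Filter.EventuallyEq.rfl⟩
    obtain ⟨B, hB, rfl⟩ := hs
    set Av : ℕ × ℕ → Set Ω := fun v => Wk ⁻¹' ({w | v ∈ Sgeo n t m w} ∩ B) with hAv_def
    have hAvm : ∀ v, MeasurableSet (Av v) := fun v =>
      hWk ((measurable_sgeo hn ht1 m v).inter hB)
    -- LHS : the set integral of ψ ∘ Wk
    have hLHS : ∫ x in Wk ⁻¹' B, ψ (Wk x) ∂μ =
        (Ehi - m) / (N : ℝ) * ∑ v ∈ grid n t, (μ (Av v)).toReal := by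
      have e1 : ∀ x, ψ (Wk x) = (Ehi - m) / (N : ℝ) * (cardS n t m (Wk x) : ℝ) := fun x => rfl
      simp_rw [e1]
      rw [integral_const_mul]
      congr 1
      have e2 : ∀ x, (cardS n t m (Wk x) : ℝ) =
          ∑ v ∈ grid n t, if v ∈ Sgeo n t m (Wk x) then (1 : ℝ) else 0 := fun x =>
        cardS_eq_sum m (Wk x)
      simp_rw [e2]
      rw [integral_finset_sum _ (fun v _ => (hIv v).integrableOn)]
      refine Finset.sum_congr rfl (fun v _ => ?_)
      have e3 : (fun ω => if v ∈ Sgeo n t m (Wk ω) then (1 : ℝ) else 0) =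
          Set.indicator {ω | v ∈ Sgeo n t m (Wk ω)} (fun _ => (1 : ℝ)) := by
        funext ω
        rw [Set.indicator_apply]
        rfl
      rw [e3, setIntegral_indicator (hVv v), setIntegral_const, smul_eq_mul, mul_one, measureReal_def]
      congr 2
      rw [hAv_def]
      ext ω
      simp only [Set.mem_inter_iff, Set.mem_preimage, Set.mem_setOf_eq]
      tauto
    -- RHS : the set integral of h
    set η : (ℕ × ℕ → ℝ) × (ℕ × ℕ) → ℝ :=
      fun p => if p.2 ∈ Sgeo n t m p.1 ∧ p.1 ∈ B then 1 else 0 with hη_def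
    have hηm : Measurable η := by
      refine Measurable.ite ?_ measurable_const measurable_const
      have heq : {p : (ℕ × ℕ → ℝ) × (ℕ × ℕ) | p.2 ∈ Sgeo n t m p.1 ∧ p.1 ∈ B} =
          {p : (ℕ × ℕ → ℝ) × (ℕ × ℕ) | p.2 ∈ Sgeo n t m p.1} ∩ (Prod.fst ⁻¹' B) := rfl
      rw [heq]
      exact hT.inter (measurable_fst hB)
    set Es : Set Ω := {ω | U ω ∈ Sgeo n t m (Wk ω) ∧ Wk ω ∈ B} with hEs_def
    have hEsm : MeasurableSet Es := by
      have heq : Es = (fun ω => (Wk ω, U ω)) ⁻¹'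
          ({p : (ℕ × ℕ → ℝ) × (ℕ × ℕ) | p.2 ∈ Sgeo n t m p.1} ∩ (Prod.fst ⁻¹' B)) := rfl
      rw [heq]
      exact (hWk.prodMk hU) (hT.inter (measurable_fst hB))
    have hstep1 : ∫ x in Wk ⁻¹' B, h x ∂μ = ∫ x, (Z x - m) * η (Wk x, U x) ∂μ := by
      rw [← integral_indicator (hWk hB)]
      congr 1
      funext ω
      by_cases hb : Wk ω ∈ B
      · have hbm : ω ∈ Wk ⁻¹' B := hb
        rw [Set.indicator_of_mem hbm]
        simp only [hh_def, hη_def]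
        by_cases hc : U ω ∈ Sgeo n t m (Wk ω)
        · rw [if_pos hc, if_pos (⟨hc, hb⟩ : U ω ∈ Sgeo n t m (Wk ω) ∧ Wk ω ∈ B)]
        · rw [if_neg hc, if_neg (fun hcc : _ ∧ _ => hc hcc.1)]
      · have hbm : ω ∉ Wk ⁻¹' B := hb
        rw [Set.indicator_of_notMem hbm]
        simp only [hη_def]
        rw [if_neg (fun hcc : _ ∧ _ => hb hcc.2), mul_zero]
    have hindep0 : ProbabilityTheory.IndepFun (fun x => Z x - m)
        (fun ω => η (Wk ω, U ω)) μ :=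
      hZindep.comp (measurable_id.sub measurable_const) hηm
    have hmul : ∫ x, (Z x - m) * η (Wk x, U x) ∂μ =
        (∫ x, (Z x - m) ∂μ) * ∫ x, η (Wk x, U x) ∂μ := by
      have e4 : (fun x => (Z x - m) * η (Wk x, U x)) =
          (fun x => Z x - m) * (fun ω => η (Wk ω, U ω)) := rfl
      rw [e4]
      exact hindep0.integral_mul_eq_mul_integral (hZ.sub measurable_const).aestronglyMeasurable
        (hηm.comp (hWk.prodMk hU)).aestronglyMeasurable
    have hZm : ∫ x, (Z x - m) ∂μ = Ehi - m := by
      rw [integral_sub hZint (integrable_const m), hZmean, integral_const, probReal_univ]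
      simp
    have hη_int : ∫ x, η (Wk x, U x) ∂μ = (μ Es).toReal := by
      have e5 : (fun ω => η (Wk ω, U ω)) = Set.indicator Es (fun _ => (1 : ℝ)) := by
        funext ω
        simp only [hη_def, hEs_def, Set.indicator_apply, Set.mem_setOf_eq]
      rw [e5, integral_indicator hEsm, setIntegral_const, smul_eq_mul, mul_one, measureReal_def]
    have hEs_meas : μ Es = ((N : ℕ) : ENNReal)⁻¹ * ∑ v ∈ grid n t, μ (Av v) := by
      have hEq : Es = ⋃ v ∈ grid n t, ({ω | U ω = v} ∩ Av v) := by
        ext ω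
        simp only [hEs_def, Set.mem_setOf_eq, Set.mem_iUnion, Set.mem_inter_iff,
          Set.mem_preimage, hAv_def]
        constructor
        · rintro ⟨hS, hb⟩
          exact ⟨U ω, hS.1, rfl, hS, hb⟩
        · rintro ⟨v, hvg, hveq, hS, hb⟩
          rw [hveq]
          exact ⟨hS, hb⟩
      have hdisj : (↑(grid n t) : Set (ℕ × ℕ)).PairwiseDisjoint
          (fun v => {ω | U ω = v} ∩ Av v) := by
        intro a _ b _ hab
        refine Set.disjoint_left.mpr ?_
        rintro ω ⟨ha, _⟩ ⟨hb2, _⟩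
        exact hab (ha ▸ hb2 ▸ rfl)
      rw [hEq, measure_biUnion_finset hdisj
        (fun v _ => ((hU (measurableSet_singleton v)).inter (hAvm v)))]
      rw [Finset.mul_sum]
      refine Finset.sum_congr rfl (fun v hv => ?_)
      have hu := hUunif v (Av v) ⟨_, (measurable_sgeo hn ht1 m v).inter hB, rfl⟩
      rw [hu]
      have hzero : ∀ ω ∈ Av v,
          (if v ∈ ((Finset.Icc 1 n) ×ˢ (Finset.Icc 1 t)) ∧ Wk ω v ≤ m
            then ((N : ℕ) : ENNReal)⁻¹ else 0) = ((N : ℕ) : ENNReal)⁻¹ := by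
        intro ω hω
        have hS : v ∈ Sgeo n t m (Wk ω) := hω.1
        exact if_pos ⟨hS.1, hS.2.1⟩
      rw [setLIntegral_congr_fun (hAvm v) hzero, setLIntegral_const]
    have htoReal : (μ Es).toReal = (N : ℝ)⁻¹ * ∑ v ∈ grid n t, (μ (Av v)).toReal := by
      rw [hEs_meas, ENNReal.toReal_mul, ENNReal.toReal_inv, ENNReal.toReal_natCast,
        ENNReal.toReal_sum (fun v _ => measure_ne_top μ _)]
    rw [hLHS, hstep1, hmul, hZm, hη_int, htoReal]
    ring
  have hptwise : ∀ ω,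
      ((n : ℝ) + t - lastPassageTime n t (fun v => if m < Wk ω v then 1 else 0)) /
        ((n * t : ℕ) - (k : ℝ)) * (Ehi - m) ≤ ψ (Wk ω) := by
    intro ω
    obtain ⟨pa, hpa, hsum⟩ := exists_geodesic hn ht1 (Wk ω)
    have hbound := hgeo ω pa hpa hsum
    have hcardle : ((Finset.range (n + t - 1)).filter (fun i => Wk ω (pa i) ≤ m)).card ≤
        cardS n t m (Wk ω) := by
      rw [cardS]
      apply Finset.card_le_card_of_injOn (fun i => pa i)
      · intro i hi
        simp only [Finset.coe_filter, Finset.mem_filter, Finset.mem_range, Set.mem_setOf_eq] at hi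
        refine Finset.mem_filter.mpr ⟨mem_grid hn ht1 hpa i (by omega), ?_⟩
        exact ⟨mem_grid hn ht1 hpa i (by omega), hi.2, pa, hpa, hsum, i, hi.1, rfl⟩
      · intro i hi j hj hij
        simp only [Finset.coe_filter, Set.mem_setOf_eq, Finset.mem_range] at hi hj
        exact path_injOn hpa (by omega) (by omega) hij
    have hkey : ((n : ℝ) + t - lastPassageTime n t (fun v => if m < Wk ω v then 1 else 0)) ≤
        (cardS n t m (Wk ω) : ℝ) := le_trans hbound (by exact_mod_cast hcardle)
    have h1 : (0 : ℝ) ≤ Ehi - m := by linarith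
    rw [hNreal, hψ_def]
    calc ((n : ℝ) + t - lastPassageTime n t (fun v => if m < Wk ω v then 1 else 0)) /
          (N : ℝ) * (Ehi - m)
        = (Ehi - m) / (N : ℝ) *
            ((n : ℝ) + t - lastPassageTime n t (fun v => if m < Wk ω v then 1 else 0)) := by
          ring
      _ ≤ (Ehi - m) / (N : ℝ) * (cardS n t m (Wk ω) : ℝ) :=
          mul_le_mul_of_nonneg_left hkey (div_nonneg h1 hNRpos.le)
  have hmono : μ[h | MeasurableSpace.comap Wk inferInstance] ≤ᵐ[μ] μ[g | MeasurableSpace.comap Wk inferInstance] := condExp_mono hhint hgint hhg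
  filter_upwards [hcond, hmono] with ω h1 h2
  exact le_trans (le_trans (hptwise ω) (le_of_eq h1)) h2
end
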